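/- arXiv:0707.3945 — 8 statements merged into one kernel-verified Lean document; each statement's English description precedes it below -/
import Mathlib

section
/- Let p, q, m ∈ ℕ, let A ∈ ℚ^{m×p}, G ∈ ℚ^{m×q}, b ∈ ℚ^m, and let P := {(x,y) ∈ ℝ^p × ℝ^q : Ax + Gy ≤ b componentwise} and P_I := conv({(x,y) ∈ P : x ∈ ℤ^p}). Let α ∈ ℚ^p, β ∈ ℚ^q, γ ∈ ℚ be such that α·x + β·y ≤ γ holds for every (x,y) ∈ P_I. Then there exist vectors d^1,…,d^{2^p} ∈ ℤ^p and integers δ^1,…,δ^{2^p} ∈ ℤ forming a 2^p-disjunction (i.e., for every x ∈ ℤ^p there is some i with d^i·x ≤ δ^i) such that every (x,y) ∈ P with α·x + β·y > γ satisfies d^i·x > δ^i for every i ∈ {1,…,2^p}. In other words, every inequality valid for P_I is a 2^p-disjunctive cut for P. -/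
/-!
The points of `P` violating the cut form a polyhedron with one strict inequality; Fourier–Motzkin
elimination of `y` describes its projection `Q` to `x`-space by finitely many rational
inequalities, strict or not. Validity for `P_I` says that `Q` contains no integer point.
Scaling to integer coefficients and rounding the right-hand sides down turns this into an
integer-infeasible system `cᵢ·x ≤ δᵢ`, which by the Doignon–Bell–Scarf theorem has an infeasible
subsystem of at most `2^p` inequalities. Their negations `cᵢ·x ≥ δᵢ + 1` form the disjunction, and
each fails on all of `Q`, since rounding changed the right-hand sides by less than one.
-/

open Set

noncomputable section

/-- The LP relaxation `P = {(x,y) : Ax + Gy ≤ b}`. -/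
def feasSet {p q m : ℕ} (A : Matrix (Fin m) (Fin p) ℚ) (G : Matrix (Fin m) (Fin q) ℚ)
    (b : Fin m → ℚ) : Set ((Fin p → ℝ) × (Fin q → ℝ)) :=
  {z | ∀ i : Fin m, (∑ j, (A i j : ℝ) * z.1 j) + (∑ j, (G i j : ℝ) * z.2 j) ≤ (b i : ℝ)}

/-- `x` is an integral vector. -/
def IsIntVec {p : ℕ} (x : Fin p → ℝ) : Prop := ∀ j, ∃ n : ℤ, x j = (n : ℝ)

/-- The mixed integer hull `P_I`. -/
def mixedIntHull {p q m : ℕ} (A : Matrix (Fin m) (Fin p) ℚ) (G : Matrix (Fin m) (Fin q) ℚ)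
    (b : Fin m → ℚ) : Set ((Fin p → ℝ) × (Fin q → ℝ)) :=
  convexHull ℝ {z ∈ feasSet A G b | IsIntVec z.1}

/-- A `k`-disjunction: every integer point satisfies one of the inequalities `dⁱ·x ≤ δⁱ`. -/
def IsKDisjunction {p : ℕ} (k : ℕ) (d : Fin k → Fin p → ℤ) (δ : Fin k → ℤ) : Prop :=
  ∀ x : Fin p → ℤ, ∃ i, (∑ j, d i j * x j) ≤ δ i

def Ineq {α : Type*} [Preorder α] (strict : Bool) (a b : α) : Prop :=
  if strict then a < b else a ≤ b

section Ineq

variable {α : Type*} [Preorder α] {s s' : Bool} {a b c : α}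

@[simp]
theorem ineq_false : Ineq false a b ↔ a ≤ b := Iff.rfl

@[simp]
theorem ineq_true : Ineq true a b ↔ a < b := Iff.rfl

theorem Ineq.le (h : Ineq s a b) : a ≤ b := by
  cases s
  exacts [h, h.le]

theorem ineq_of_lt (h : a < b) : Ineq s a b := by
  cases s
  exacts [h.le, h]

theorem Ineq.trans (hab : Ineq s a b) (hbc : Ineq s' b c) : Ineq (s || s') a c := by
  cases s <;> cases s' <;> simp only [ineq_false, ineq_true, Bool.or_true, Bool.or_false] at * <;>
    order

end Ineq

section OrderedField

variable {K : Type*} [Field K] [LinearOrder K] [IsStrictOrderedRing K] {s s' : Bool} {a b : K}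

theorem ineq_iff_of_sub_eq_mul {a' b' k : K} (hk : 0 < k) (h : a - b = k * (a' - b')) :
    Ineq s a b ↔ Ineq s a' b' := by
  cases s <;> simp only [ineq_false, ineq_true] <;> constructor <;> intro <;> nlinarith

theorem Ineq.midpoint_left {l u : K} (h : Ineq (s || s') a u) (hal : a ≤ l) (hlu : l ≤ u) :
    Ineq s a ((l + u) / 2) := by
  cases s <;> cases s' <;> simp only [ineq_false, ineq_true, Bool.or_true, Bool.or_false] at * <;>
    linarith

theorem Ineq.midpoint_right {l u : K} (h : Ineq (s || s') l b) (hlu : l ≤ u) (hub : u ≤ b) :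
    Ineq s' ((l + u) / 2) b := by
  cases s <;> cases s' <;> simp only [ineq_false, ineq_true, Bool.or_true, Bool.or_false] at * <;>
    linarith

theorem exists_ineq_between {ι κ : Type*} {I : Set ι} {J : Set κ} (hI : I.Finite) (hJ : J.Finite)
    (a : ι → K) (b : κ → K) (s : ι → Bool) (s' : κ → Bool)
    (h : ∀ i ∈ I, ∀ j ∈ J, Ineq (s i || s' j) (a i) (b j)) :
    ∃ t, (∀ i ∈ I, Ineq (s i) (a i) t) ∧ ∀ j ∈ J, Ineq (s' j) t (b j) := by
  rcases I.eq_empty_or_nonempty with rfl | hIne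
  · obtain ⟨M, hM⟩ := (hJ.image b).bddBelow
    exact ⟨M - 1, by simp, fun j hj => ineq_of_lt (by linarith [hM (Set.mem_image_of_mem b hj)])⟩
  rcases J.eq_empty_or_nonempty with rfl | hJne
  · obtain ⟨M, hM⟩ := (hI.image a).bddAbove
    exact ⟨M + 1, fun i hi => ineq_of_lt (by linarith [hM (Set.mem_image_of_mem a hi)]), by simp⟩
  obtain ⟨i₀, hi₀, hmax⟩ := Set.exists_max_image I a hI hIne
  obtain ⟨j₀, hj₀, hmin⟩ := Set.exists_min_image J b hJ hJne
  have hle : a i₀ ≤ b j₀ := (h i₀ hi₀ j₀ hj₀).le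
  exact ⟨(a i₀ + b j₀) / 2, fun i hi => (h i hi j₀ hj₀).midpoint_left (hmax i hi) hle,
    fun j hj => (h i₀ hi₀ j hj).midpoint_right hle (hmin j hj)⟩

end OrderedField

structure LinIneq (n : ℕ) where
  coeff : Fin n → ℚ
  rhs : ℚ
  strict : Bool

namespace LinIneq

variable {n : ℕ}

def lhs (C : LinIneq n) (v : Fin n → ℝ) : ℝ := ∑ j, (C.coeff j : ℝ) * v j

def Holds (C : LinIneq n) (v : Fin n → ℝ) : Prop := Ineq C.strict (C.lhs v) C.rhs

def init (C : LinIneq (n + 1)) : LinIneq n := ⟨Fin.init C.coeff, C.rhs, C.strict⟩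

def lastBound (C : LinIneq (n + 1)) (v : Fin n → ℝ) : ℝ :=
  (C.rhs - C.init.lhs v) / C.coeff (Fin.last n)

/-- The positive combination of a lower bound `C` and an upper bound `D` on the last variable
that cancels it. -/
def elimPair (C D : LinIneq (n + 1)) : LinIneq n :=
  ⟨D.coeff (Fin.last n) • Fin.init C.coeff - C.coeff (Fin.last n) • Fin.init D.coeff,
    D.coeff (Fin.last n) * C.rhs - C.coeff (Fin.last n) * D.rhs, C.strict || D.strict⟩

/-- One step of Fourier–Motzkin elimination. -/
def elimLast (L : List (LinIneq (n + 1))) : List (LinIneq n) :=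
  (L.filter fun C => C.coeff (Fin.last n) = 0).map init ++
    (L.filter fun C => C.coeff (Fin.last n) < 0).flatMap fun C =>
      (L.filter fun D => 0 < D.coeff (Fin.last n)).map (elimPair C)

theorem lhs_snoc (C : LinIneq (n + 1)) (v : Fin n → ℝ) (t : ℝ) :
    C.lhs (Fin.snoc v t) = C.init.lhs v + C.coeff (Fin.last n) * t := by
  simp [lhs, init, Fin.sum_univ_castSucc, Fin.init]

theorem lhs_elimPair (C D : LinIneq (n + 1)) (v : Fin n → ℝ) :
    (elimPair C D).lhs v =
      D.coeff (Fin.last n) * C.init.lhs v - C.coeff (Fin.last n) * D.init.lhs v := by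
  simp only [lhs, elimPair, init, Pi.sub_apply, Pi.smul_apply, smul_eq_mul, Rat.cast_sub,
    Rat.cast_mul, Finset.mul_sum, ← Finset.sum_sub_distrib]
  exact Finset.sum_congr rfl fun j _ => by ring

variable {C D : LinIneq (n + 1)} {v : Fin n → ℝ} {t : ℝ}

theorem holds_snoc_iff_of_eq_zero (hC : C.coeff (Fin.last n) = 0) :
    C.Holds (Fin.snoc v t) ↔ C.init.Holds v := by
  simp [Holds, lhs_snoc, hC, init]

theorem holds_snoc_iff_of_neg (hC : C.coeff (Fin.last n) < 0) :
    C.Holds (Fin.snoc v t) ↔ Ineq C.strict (C.lastBound v) t := by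
  have hc : (C.coeff (Fin.last n) : ℝ) < 0 := by exact_mod_cast hC
  refine ineq_iff_of_sub_eq_mul (neg_pos.2 hc) ?_
  rw [lhs_snoc, lastBound]
  field_simp [hc.ne]
  ring

theorem holds_snoc_iff_of_pos (hC : 0 < C.coeff (Fin.last n)) :
    C.Holds (Fin.snoc v t) ↔ Ineq C.strict t (C.lastBound v) := by
  have hc : (0 : ℝ) < C.coeff (Fin.last n) := by exact_mod_cast hC
  refine ineq_iff_of_sub_eq_mul hc ?_
  rw [lhs_snoc, lastBound]
  field_simp [hc.ne']
  ring

theorem holds_elimPair_iff (hC : C.coeff (Fin.last n) < 0) (hD : 0 < D.coeff (Fin.last n)) :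
    (elimPair C D).Holds v ↔ Ineq (C.strict || D.strict) (C.lastBound v) (D.lastBound v) := by
  have hc : (C.coeff (Fin.last n) : ℝ) < 0 := by exact_mod_cast hC
  have hd : (0 : ℝ) < D.coeff (Fin.last n) := by exact_mod_cast hD
  refine ineq_iff_of_sub_eq_mul (mul_pos (neg_pos.2 hc) hd) ?_
  rw [lhs_elimPair, lastBound, lastBound]
  simp only [elimPair, Rat.cast_sub, Rat.cast_mul]
  field_simp [hc.ne, hd.ne']
  ring

theorem holds_elimLast_iff (L : List (LinIneq (n + 1))) (v : Fin n → ℝ) :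
    (∀ C ∈ elimLast L, C.Holds v) ↔ ∃ t, ∀ C ∈ L, C.Holds (Fin.snoc v t) := by
  simp only [elimLast, List.mem_append, List.mem_map, List.mem_flatMap, List.mem_filter,
    decide_eq_true_eq]
  constructor
  · intro h
    obtain ⟨t, hlower, hupper⟩ := exists_ineq_between
      (I := {C | C ∈ L ∧ C.coeff (Fin.last n) < 0}) (J := {D | D ∈ L ∧ 0 < D.coeff (Fin.last n)})
      (L.finite_toSet.subset fun _ hC => hC.1) (L.finite_toSet.subset fun _ hD => hD.1)
      (lastBound · v) (lastBound · v) strict strict fun C hC D hD =>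
        (holds_elimPair_iff hC.2 hD.2).1 (h _ (Or.inr ⟨C, hC, D, hD, rfl⟩))
    refine ⟨t, fun C hC => ?_⟩
    rcases lt_trichotomy (C.coeff (Fin.last n)) 0 with hneg | hzero | hpos
    · exact (holds_snoc_iff_of_neg hneg).2 (hlower C ⟨hC, hneg⟩)
    · exact (holds_snoc_iff_of_eq_zero hzero).2 (h _ (Or.inl ⟨C, ⟨hC, hzero⟩, rfl⟩))
    · exact (holds_snoc_iff_of_pos hpos).2 (hupper C ⟨hC, hpos⟩)
  · rintro ⟨t, ht⟩ _ (⟨C, ⟨hC, hzero⟩, rfl⟩ | ⟨C, ⟨hC, hneg⟩, D, ⟨hD, hpos⟩, rfl⟩)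
    · exact (holds_snoc_iff_of_eq_zero hzero).1 (ht C hC)
    · exact (holds_elimPair_iff hneg hpos).2
        (((holds_snoc_iff_of_neg hneg).1 (ht C hC)).trans
          ((holds_snoc_iff_of_pos hpos).1 (ht D hD)))

theorem exists_projection :
    ∀ {k : ℕ} (L : List (LinIneq (n + k))), ∃ L' : List (LinIneq n),
      ∀ v, (∀ C ∈ L', C.Holds v) ↔ ∃ w : Fin k → ℝ, ∀ C ∈ L, C.Holds (Fin.append v w)
  | 0, L => ⟨L, fun v => by simp [show ∀ w : Fin 0 → ℝ, Fin.append v w = v from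
      fun w => funext (Fin.append_left v w)]⟩
  | k + 1, L => by
    obtain ⟨L', hL'⟩ := exists_projection (elimLast L)
    refine ⟨L', fun v => (hL' v).trans ?_⟩
    simp only [holds_elimLast_iff, ← Fin.append_snoc]
    exact ⟨fun ⟨w, t, h⟩ => ⟨Fin.snoc w t, h⟩,
      fun ⟨w, h⟩ => ⟨Fin.init w, w (Fin.last k), by rwa [Fin.snoc_init_self]⟩⟩

end LinIneq

section Rounding

variable {K : Type*} [Ring K] [LinearOrder K] [FloorRing K]

def intBound (s : Bool) (ρ : K) : ℤ := if s then ⌈ρ⌉ - 1 else ⌊ρ⌋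

theorem intCast_ineq_iff {s : Bool} {ρ : K} (z : ℤ) : Ineq s (z : K) ρ ↔ z ≤ intBound s ρ := by
  cases s
  · exact Int.le_floor.symm
  · simp only [ineq_true, intBound, ↓reduceIte]
    rw [← Int.lt_ceil]
    omega

theorem Ineq.lt_intBound_add_one [IsStrictOrderedRing K] {s : Bool} {u ρ : K} (h : Ineq s u ρ) :
    u < intBound s ρ + 1 := by
  cases s
  · simpa [intBound] using h.le.trans_lt (Int.lt_floor_add_one ρ)
  · simpa [intBound] using (show u < ρ from h).trans_le (Int.le_ceil ρ)

end Rounding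

theorem exists_pos_nat_mul_eq_intCast {ι : Type*} [Fintype ι] (a : ι → ℚ) :
    ∃ N : ℕ, 0 < N ∧ ∃ c : ι → ℤ, ∀ j, (c j : ℚ) = N * a j := by
  classical
  refine ⟨∏ k, (a k).den, Finset.prod_pos fun k _ => (a k).pos,
    fun j => (∏ k ∈ Finset.univ.erase j, ((a k).den : ℤ)) * (a j).num, fun j => ?_⟩
  push_cast
  rw [← Finset.prod_erase_mul _ _ (Finset.mem_univ j), mul_assoc, Rat.den_mul_eq_num]

theorem LinIneq.exists_int_ineq {p : ℕ} (C : LinIneq p) :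
    ∃ (c : Fin p → ℤ) (δ : ℤ), (∀ v : Fin p → ℤ, C.Holds (fun j => v j) ↔ ∑ j, c j * v j ≤ δ) ∧
      ∀ x, C.Holds x → ∑ j, (c j : ℝ) * x j < δ + 1 := by
  obtain ⟨N, hN, c, hc⟩ := exists_pos_nat_mul_eq_intCast C.coeff
  have hNR : (0 : ℝ) < N := by exact_mod_cast hN
  have hscale : ∀ x, C.Holds x ↔ Ineq C.strict (∑ j, (c j : ℝ) * x j) (N * C.rhs) := fun x => by
    refine ineq_iff_of_sub_eq_mul (inv_pos.2 hNR) ?_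
    have hcR : ∀ j, (c j : ℝ) = N * C.coeff j := fun j => by exact_mod_cast hc j
    simp only [LinIneq.lhs, hcR, mul_assoc, ← Finset.mul_sum]
    field_simp
  refine ⟨c, intBound C.strict ((N : ℝ) * C.rhs), fun v => ?_,
    fun x hx => ((hscale x).1 hx).lt_intBound_add_one⟩
  rw [hscale, ← intCast_ineq_iff]
  push_cast
  rfl

section Doignon

variable {p : ℕ} {ι : Type*}

def IntFeasible (a : ι → Fin p → ℤ) (b : ι → ℤ) (T : Finset ι) : Prop :=
  ∃ x : Fin p → ℤ, ∀ i ∈ T, a i ⬝ᵥ x ≤ b i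

theorem exists_ne_add_eq_two_smul_of_card_lt (T : Finset ι) (Y : ι → Fin p → ℤ)
    (hT : 2 ^ p < T.card) : ∃ i ∈ T, ∃ j ∈ T, i ≠ j ∧ ∃ z, Y i + Y j = (2 : ℤ) • z := by
  have hcard : (Finset.univ : Finset (Fin p → ZMod 2)).card < T.card := by simpa using hT
  obtain ⟨i, hi, j, hj, hij, hparity⟩ := Finset.exists_ne_map_eq_of_card_lt_of_maps_to hcard
    (f := fun i l => (Y i l : ZMod 2)) fun _ _ => Finset.mem_coe.2 (Finset.mem_univ _)
  have hhalf : ∀ l, ∃ z, Y i l + Y j l = 2 * z := fun l => by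
    obtain ⟨k, hk⟩ := (ZMod.intCast_eq_intCast_iff_dvd_sub _ _ 2).1 (congrFun hparity l)
    exact ⟨Y i l + k, by push_cast at hk; omega⟩
  choose z hz using hhalf
  exact ⟨i, hi, j, hj, hij, z, funext fun l => by simpa using hz l⟩

variable [DecidableEq ι] {a : ι → Fin p → ℤ} {b : ι → ℤ} {T : Finset ι}

/-- Two of the solutions of the relaxed systems have the same parity, and their midpoint solves
the unrelaxed system. -/
theorem intFeasible_of_forall_intFeasible_update (hT : 2 ^ p < T.card)
    (h : ∀ i ∈ T, IntFeasible a (Function.update b i (b i + 1)) T) : IntFeasible a b T := by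
  choose! Y hY using h
  obtain ⟨i, hi, j, hj, hij, z, hz⟩ := exists_ne_add_eq_two_smul_of_card_lt T Y hT
  refine ⟨z, fun k hk => ?_⟩
  have hmid : 2 * (a k ⬝ᵥ z) = a k ⬝ᵥ Y i + a k ⬝ᵥ Y j := by
    rw [← dotProduct_add, hz, dotProduct_smul, smul_eq_mul]
  have hYi := hY i hi k hk
  have hYj := hY j hj k hk
  rcases eq_or_ne k i with rfl | hki
  · simp only [Function.update_self, Function.update_of_ne hij] at hYi hYj
    omega
  rcases eq_or_ne k j with rfl | hkj
  · simp only [Function.update_self, Function.update_of_ne hki] at hYi hYj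
    omega
  · simp only [Function.update_of_ne hki, Function.update_of_ne hkj] at hYi hYj
    omega

theorem lt_dotProduct_of_not_intFeasible {b' : ι → ℤ} {w : Fin p → ℤ} {i : ι} (hi : i ∈ T)
    (hw : ∀ k ∈ T.erase i, a k ⬝ᵥ w ≤ b k) (hb : ∀ k ∈ T, b k ≤ b' k)
    (h : ¬ IntFeasible a b' T) : b' i < a i ⬝ᵥ w := by
  by_contra! hle
  refine h ⟨w, fun k hk => ?_⟩
  rcases eq_or_ne k i with rfl | hki
  · exact hle
  · exact (hw k (Finset.mem_erase.2 ⟨hki, hk⟩)).trans (hb k hk)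

/-- Minimality bounds how far the right-hand sides can be raised with the system staying
infeasible, so some maximal such relaxation exists. -/
theorem exists_maximal_infeasible_relaxation (h : ¬ IntFeasible a b T)
    (hmin : ∀ i ∈ T, IntFeasible a b (T.erase i)) :
    ∃ b', ¬ IntFeasible a b' T ∧ ∀ i ∈ T, IntFeasible a (Function.update b' i (b' i + 1)) T := by
  choose! w hw using hmin
  let Relax (s : ℤ) : Prop :=
    ∃ b', (∀ k ∈ T, b k ≤ b' k) ∧ ¬ IntFeasible a b' T ∧ s = ∑ k ∈ T, b' k
  have hbdd : ∃ M, ∀ s, Relax s → s ≤ M := ⟨∑ k ∈ T, a k ⬝ᵥ w k, by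
    rintro _ ⟨b', hb, hb', rfl⟩
    exact Finset.sum_le_sum fun k hk => (lt_dotProduct_of_not_intFeasible hk (hw k hk) hb hb').le⟩
  obtain ⟨s, ⟨b', hb, hb', rfl⟩, hgreatest⟩ :=
    Int.exists_greatest_of_bdd hbdd ⟨_, b, fun _ _ => le_rfl, h, rfl⟩
  refine ⟨b', hb', fun i hi => by_contra fun hinf => ?_⟩
  have hsum : ∑ k ∈ T, Function.update b' i (b' i + 1) k = ∑ k ∈ T, b' k + 1 := by
    rw [Finset.sum_update_of_mem hi, ← Finset.add_sum_erase T b' hi,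
      Finset.sdiff_singleton_eq_erase]
    ring
  have hrelax : Relax (∑ k ∈ T, b' k + 1) := ⟨_, fun k hk => ?_, hinf, hsum.symm⟩
  · exact absurd (hgreatest _ hrelax) (by omega)
  · rcases eq_or_ne k i with rfl | hki
    · simpa using (hb k hk).trans (Int.le_add_one le_rfl)
    · simpa [Function.update_of_ne hki] using hb k hk

theorem card_le_two_pow_of_minimal_not_intFeasible (h : ¬ IntFeasible a b T)
    (hmin : ∀ i ∈ T, IntFeasible a b (T.erase i)) : T.card ≤ 2 ^ p := by
  obtain ⟨b', hb', hrelax⟩ := exists_maximal_infeasible_relaxation h hmin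
  by_contra! hT
  exact hb' (intFeasible_of_forall_intFeasible_update hT hrelax)

/-- The Doignon–Bell–Scarf theorem. -/
theorem exists_subset_card_le_two_pow_not_intFeasible {S : Finset ι} (h : ¬ IntFeasible a b S) :
    ∃ T ⊆ S, T.card ≤ 2 ^ p ∧ ¬ IntFeasible a b T := by
  classical
  obtain ⟨T, hTmin⟩ := (S.powerset.filter fun T => ¬ IntFeasible a b T).exists_minimal
    ⟨S, Finset.mem_filter.2 ⟨Finset.mem_powerset_self S, h⟩⟩
  obtain ⟨hTS, hT⟩ := Finset.mem_filter.1 hTmin.prop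
  refine ⟨T, Finset.mem_powerset.1 hTS,
    card_le_two_pow_of_minimal_not_intFeasible hT fun i hi => ?_, hT⟩
  by_contra hinf
  have hmem : T.erase i ∈ S.powerset.filter fun T => ¬ IntFeasible a b T :=
    Finset.mem_filter.2 ⟨Finset.mem_powerset.2 ((T.erase_subset i).trans
      (Finset.mem_powerset.1 hTS)), hinf⟩
  exact (Finset.erase_ssubset hi).ne (hTmin.eq_of_le hmem (T.erase_subset i))

end Doignon

theorem LinIneq.exists_two_pow_disjunction {p : ℕ} (L : List (LinIneq p))
    (hL : ∀ v : Fin p → ℤ, ¬ ∀ C ∈ L, C.Holds fun j => v j) :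
    ∃ (d : Fin (2 ^ p) → Fin p → ℤ) (δ : Fin (2 ^ p) → ℤ), IsKDisjunction (2 ^ p) d δ ∧
      ∀ x, (∀ C ∈ L, C.Holds x) → ∀ i, (δ i : ℝ) < ∑ j, (d i j : ℝ) * x j := by
  classical
  choose c δ hint hreal using LinIneq.exists_int_ineq (p := p)
  have hS : ¬ IntFeasible c δ L.toFinset := fun ⟨v, hv⟩ =>
    hL v fun C hC => (hint C v).2 (hv C (List.mem_toFinset.2 hC))
  obtain ⟨T, hTS, hTcard, hT⟩ := exists_subset_card_le_two_pow_not_intFeasible hS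
  obtain ⟨C₀, hC₀⟩ : T.Nonempty := Finset.nonempty_iff_ne_empty.2 fun hT0 => hT ⟨0, by simp [hT0]⟩
  obtain ⟨f, hf⟩ : ∃ f : Fin (2 ^ p) → T, f.Surjective :=
    Function.exists_surjective_iff.2 ⟨⟨fun _ => ⟨C₀, hC₀⟩⟩,
      Function.Embedding.nonempty_of_card_le (by simpa using hTcard)⟩
  refine ⟨fun i => -c (f i), fun i => -δ (f i) - 1, fun v => ?_, fun x hx i => ?_⟩
  · obtain ⟨C, hC, hviol⟩ : ∃ C ∈ T, δ C < c C ⬝ᵥ v := by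
      by_contra! hall
      exact hT ⟨v, hall⟩
    obtain ⟨i, hi⟩ := hf ⟨C, hC⟩
    refine ⟨i, ?_⟩
    change -c (f i) ⬝ᵥ v ≤ -δ (f i) - 1
    rw [hi, neg_dotProduct]
    exact (by omega : -(c C ⬝ᵥ v) ≤ -δ C - 1)
  · have := hreal _ x (hx _ (List.mem_toFinset.1 (hTS (f i).2)))
    simp only [Pi.neg_apply, Int.cast_neg, Int.cast_sub, Int.cast_one, neg_mul,
      Finset.sum_neg_distrib]
    linarith

def cutSystem {p q m : ℕ} (A : Matrix (Fin m) (Fin p) ℚ) (G : Matrix (Fin m) (Fin q) ℚ)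
    (b : Fin m → ℚ) (α : Fin p → ℚ) (β : Fin q → ℚ) (γ : ℚ) : List (LinIneq (p + q)) :=
  List.ofFn (fun i => ⟨Fin.append (A i) (G i), b i, false⟩) ++ [⟨Fin.append (-α) (-β), -γ, true⟩]

theorem holds_cutSystem_iff {p q m : ℕ} (A : Matrix (Fin m) (Fin p) ℚ)
    (G : Matrix (Fin m) (Fin q) ℚ) (b : Fin m → ℚ) (α : Fin p → ℚ) (β : Fin q → ℚ) (γ : ℚ)
    (x : Fin p → ℝ) (y : Fin q → ℝ) :
    (∀ C ∈ cutSystem A G b α β γ, C.Holds (Fin.append x y)) ↔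
      (x, y) ∈ feasSet A G b ∧ (γ : ℝ) < (∑ j, (α j : ℝ) * x j) + (∑ j, (β j : ℝ) * y j) := by
  have hlhs : ∀ (a : Fin p → ℚ) (g : Fin q → ℚ) r s, (⟨Fin.append a g, r, s⟩ : LinIneq (p + q)).lhs
      (Fin.append x y) = (∑ j, (a j : ℝ) * x j) + ∑ j, (g j : ℝ) * y j := fun a g r s => by
    simp [LinIneq.lhs, Fin.sum_univ_add]
  simp only [cutSystem, List.mem_append, List.mem_ofFn, List.mem_singleton, or_imp, forall_and,
    forall_exists_index, forall_apply_eq_imp_iff, forall_eq, LinIneq.Holds, hlhs]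
  refine and_congr Iff.rfl ?_
  simp only [ineq_true, Pi.neg_apply, Rat.cast_neg, neg_mul, Finset.sum_neg_distrib,
    ← neg_add, neg_lt_neg_iff]

/-- Every inequality valid for the mixed integer hull `P_I` is a `2^p`-disjunctive cut for `P`. -/
theorem every_valid_inequality_is_two_pow_p_disjunctive_cut
    {p q m : ℕ} (A : Matrix (Fin m) (Fin p) ℚ) (G : Matrix (Fin m) (Fin q) ℚ) (b : Fin m → ℚ)
    (α : Fin p → ℚ) (β : Fin q → ℚ) (γ : ℚ)
    (hvalid : ∀ z ∈ mixedIntHull A G b,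
      (∑ j, (α j : ℝ) * z.1 j) + (∑ j, (β j : ℝ) * z.2 j) ≤ (γ : ℝ)) :
    ∃ (d : Fin (2 ^ p) → Fin p → ℤ) (δ : Fin (2 ^ p) → ℤ),
      IsKDisjunction (2 ^ p) d δ ∧
      ∀ z ∈ feasSet A G b,
        (γ : ℝ) < (∑ j, (α j : ℝ) * z.1 j) + (∑ j, (β j : ℝ) * z.2 j) →
        ∀ i, (δ i : ℝ) < ∑ j, (d i j : ℝ) * z.1 j := by
  obtain ⟨L, hL⟩ := LinIneq.exists_projection (cutSystem A G b α β γ)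
  have hproj : ∀ x, (∀ C ∈ L, C.Holds x) ↔ ∃ y, (x, y) ∈ feasSet A G b ∧
      (γ : ℝ) < (∑ j, (α j : ℝ) * x j) + (∑ j, (β j : ℝ) * y j) := fun x =>
    (hL x).trans (exists_congr fun y => holds_cutSystem_iff A G b α β γ x y)
  obtain ⟨d, δ, hdisj, hcut⟩ := LinIneq.exists_two_pow_disjunction L fun v hv => by
    obtain ⟨y, hfeas, hviol⟩ := (hproj _).1 hv
    have := hvalid _ (subset_convexHull ℝ _ ⟨hfeas, fun j => ⟨v j, rfl⟩⟩)
    exact hviol.not_ge this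
  exact ⟨d, δ, hdisj, fun z hz hviol => hcut z.1 ((hproj z.1).2 ⟨z.2, hz, hviol⟩)⟩

end
end

section
/- Let p, q, m ∈ ℕ, let A ∈ ℚ^{m×p}, G ∈ ℚ^{m×q}, b ∈ ℚ^m, and suppose P := {(x,y) ∈ ℝ^p × ℝ^q : Ax + Gy ≤ b componentwise} is bounded (a polytope) with P_I := conv({(x,y) ∈ P : x ∈ ℤ^p}) nonempty. Let c ∈ ℚ^p, h ∈ ℚ^q, let γ* := sup{c·x + h·y : (x,y) ∈ P_I}, and for i ∈ ℕ let γ^{(i)} := sup{c·x + h·y : (x,y) ∈ P^{(i)}}, where P^{(i)} denotes the i-th iterated split closure of P. Then for every ε > 0 there exists i₀ ∈ ℕ with |γ^{(i₀)} − γ*| < ε. -/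
open Set

noncomputable section

/-- The split closure of a set `C`: the intersection of `C` with all half-spaces valid for
both sides of some split disjunction `d·x ≤ δ ∨ d·x ≥ δ + 1`. -/
def splitClosure {p q : ℕ} (C : Set ((Fin p → ℝ) × (Fin q → ℝ))) :
    Set ((Fin p → ℝ) × (Fin q → ℝ)) :=
  {z ∈ C | ∀ (α : Fin p → ℝ) (β : Fin q → ℝ) (γ : ℝ),
    (∃ (d : Fin p → ℤ) (δ : ℤ),
      ∀ w ∈ C, ((∑ j, (d j : ℝ) * w.1 j) ≤ (δ : ℝ) ∨ (δ : ℝ) + 1 ≤ (∑ j, (d j : ℝ) * w.1 j)) →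
        (∑ j, α j * w.1 j) + (∑ j, β j * w.2 j) ≤ γ) →
    (∑ j, α j * z.1 j) + (∑ j, β j * z.2 j) ≤ γ}

/-- Iterated split closures, `C^{(0)} = C`. -/
def splitIter {p q : ℕ} (C : Set ((Fin p → ℝ) × (Fin q → ℝ))) :
    ℕ → Set ((Fin p → ℝ) × (Fin q → ℝ))
  | 0 => C
  | (i+1) => splitClosure (splitIter C i)

/-! Every iterate `P^{(i)}` contains `P_I`, and the iterates decrease to the compact convex set
`Q = ⋂ i, P^{(i)}`. By compactness, a split cut valid for `Q` is valid up to any `ε > 0` for some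
`P^{(i)}`, hence for `P^{(i+1)} ⊇ Q`; so `Q` is its own split closure. An extreme point `z` of `Q`
with `z.1 j ∉ ℤ` would lie outside the compact convex hull of the two sides of the split
`x_j ≤ ⌊z.1 j⌋ ∨ x_j ≥ ⌊z.1 j⌋ + 1`, and a hyperplane separating them is a split cut removing `z`.
By Krein–Milman `Q ⊆ closure P_I`, and compactness once more turns this into convergence of the
optimal values. -/

theorem Antitone.exists_subset_of_iInter_subset {X : Type*} [TopologicalSpace X] [T2Space X]
    {K : ℕ → Set X} (hK : Antitone K) (hKc : ∀ i, IsCompact (K i)) {U : Set X} (hU : IsOpen U)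
    (hKU : ⋂ i, K i ⊆ U) : ∃ i, K i ⊆ U :=
  exists_subset_nhds_of_isCompact' hK.directed_ge hKc (fun i => (hKc i).isClosed)
    fun _ hx => hU.mem_nhds (hKU hx)

theorem exists_abs_sSup_image_sub_lt {X : Type*} [TopologicalSpace X] [T2Space X] {f : X → ℝ}
    (hf : Continuous f) {K : ℕ → Set X} (hK : Antitone K) (hKc : ∀ i, IsCompact (K i))
    {S : Set X} (hS : S.Nonempty) (hSK : ∀ i, S ⊆ K i) (hKS : ⋂ i, K i ⊆ closure S)
    {ε : ℝ} (hε : 0 < ε) : ∃ i, |sSup (f '' K i) - sSup (f '' S)| < ε := by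
  have hbdd : BddAbove (f '' S) :=
    ((hKc 0).bddAbove_image hf.continuousOn).mono (image_mono (hSK 0))
  have hle : ∀ x ∈ closure S, f x ≤ sSup (f '' S) := fun x hx =>
    closure_minimal (fun y hy => le_csSup hbdd (mem_image_of_mem f hy))
      (isClosed_le hf continuous_const) hx
  obtain ⟨i, hi⟩ := hK.exists_subset_of_iInter_subset hKc (isOpen_lt hf continuous_const)
    fun x hx => (hle x (hKS hx)).trans_lt (lt_add_of_pos_right _ hε)
  have hlt : sSup (f '' K i) < sSup (f '' S) + ε :=
    ((hKc i).sSup_lt_iff_of_continuous (hS.mono (hSK i)) hf.continuousOn _).2 hi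
  have hge : sSup (f '' S) ≤ sSup (f '' K i) :=
    csSup_le_csSup ((hKc i).bddAbove_image hf.continuousOn) (hS.image f) (image_mono (hSK i))
  exact ⟨i, abs_sub_lt_iff.2 ⟨by linarith, by linarith⟩⟩

theorem isCompact_convexJoin {E : Type*} [AddCommGroup E] [Module ℝ E] [TopologicalSpace E]
    [ContinuousAdd E] [ContinuousSMul ℝ E] {S T : Set E} (hS : IsCompact S) (hT : IsCompact T) :
    IsCompact (convexJoin ℝ S T) := by
  have : convexJoin ℝ S T =
      (fun x : E × E × ℝ => (1 - x.2.2) • x.1 + x.2.2 • x.2.1) '' S ×ˢ T ×ˢ Icc 0 1 := by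
    ext x
    simp only [mem_convexJoin, segment_eq_image, mem_image, mem_prod, Prod.exists]
    aesop
  rw [this]
  exact (hS.prod (hT.prod isCompact_Icc)).image (by fun_prop)

theorem isCompact_convexHull_union {E : Type*} [AddCommGroup E] [Module ℝ E]
    [TopologicalSpace E] [ContinuousAdd E] [ContinuousSMul ℝ E] {S T : Set E}
    (hS : IsCompact S) (hT : IsCompact T) (hSc : Convex ℝ S) (hTc : Convex ℝ T) :
    IsCompact (convexHull ℝ (S ∪ T)) := by
  rcases S.eq_empty_or_nonempty with rfl | hS₀
  · simpa [hTc.convexHull_eq] using hT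
  rcases T.eq_empty_or_nonempty with rfl | hT₀
  · simpa [hSc.convexHull_eq] using hS
  rw [hSc.convexHull_union hTc hS₀ hT₀]
  exact isCompact_convexJoin hS hT

theorem mem_of_mem_extremePoints_of_mem_convexHull {E : Type*} [AddCommGroup E] [Module ℝ E]
    {K S : Set E} (hSK : convexHull ℝ S ⊆ K) {z : E} (hz : z ∈ extremePoints ℝ K)
    (hzS : z ∈ convexHull ℝ S) : z ∈ S :=
  extremePoints_convexHull_subset (inter_extremePoints_subset_extremePoints_of_subset hSK ⟨hzS, hz⟩)

section

variable {p q : ℕ}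

-- Built from `dotProductEquiv` so that it unfolds definitionally to the sums in `splitClosure`.
def linForm (α : Fin p → ℝ) (β : Fin q → ℝ) : ((Fin p → ℝ) × (Fin q → ℝ)) →ₗ[ℝ] ℝ :=
  (dotProductEquiv ℝ (Fin p) α).coprod (dotProductEquiv ℝ (Fin q) β)

theorem linForm_apply (α : Fin p → ℝ) (β : Fin q → ℝ) (z : (Fin p → ℝ) × (Fin q → ℝ)) :
    linForm α β z = (∑ j, α j * z.1 j) + ∑ j, β j * z.2 j :=
  rfl

theorem continuous_linForm (α : Fin p → ℝ) (β : Fin q → ℝ) : Continuous (linForm α β) :=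
  (linForm α β).continuous_of_finiteDimensional

theorem exists_linForm_eq (f : ((Fin p → ℝ) × (Fin q → ℝ)) →ₗ[ℝ] ℝ) :
    ∃ α β, linForm α β = f :=
  ⟨(dotProductEquiv ℝ _).symm (f ∘ₗ LinearMap.inl ℝ _ _),
    (dotProductEquiv ℝ _).symm (f ∘ₗ LinearMap.inr ℝ _ _), by simp [linForm]⟩

def IsSplitCut (C : Set ((Fin p → ℝ) × (Fin q → ℝ))) (α : Fin p → ℝ) (β : Fin q → ℝ)
    (γ : ℝ) : Prop :=
  ∃ (d : Fin p → ℤ) (δ : ℤ), ∀ w ∈ C,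
    ((∑ j, (d j : ℝ) * w.1 j) ≤ δ ∨ (δ : ℝ) + 1 ≤ ∑ j, (d j : ℝ) * w.1 j) → linForm α β w ≤ γ

theorem mem_splitClosure {C : Set ((Fin p → ℝ) × (Fin q → ℝ))} {z : (Fin p → ℝ) × (Fin q → ℝ)} :
    z ∈ splitClosure C ↔ z ∈ C ∧ ∀ α β γ, IsSplitCut C α β γ → linForm α β z ≤ γ :=
  Iff.rfl

theorem splitClosure_eq_inter (C : Set ((Fin p → ℝ) × (Fin q → ℝ))) :
    splitClosure C =
      C ∩ ⋂ (α) (β) (γ) (_ : IsSplitCut C α β γ), {z | linForm α β z ≤ γ} := by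
  ext z
  simp only [mem_splitClosure, mem_inter_iff, mem_iInter, mem_ofPred_eq]

theorem splitClosure_subset (C : Set ((Fin p → ℝ) × (Fin q → ℝ))) : splitClosure C ⊆ C :=
  fun _ hz => hz.1

theorem isClosed_splitClosure {C : Set ((Fin p → ℝ) × (Fin q → ℝ))} (hC : IsClosed C) :
    IsClosed (splitClosure C) := by
  rw [splitClosure_eq_inter]
  exact hC.inter <| isClosed_iInter fun α => isClosed_iInter fun β => isClosed_iInter fun γ =>
    isClosed_iInter fun _ => isClosed_le (continuous_linForm α β) continuous_const

theorem convex_splitClosure {C : Set ((Fin p → ℝ) × (Fin q → ℝ))} (hC : Convex ℝ C) :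
    Convex ℝ (splitClosure C) := by
  rw [splitClosure_eq_inter]
  exact hC.inter <| convex_iInter fun α => convex_iInter fun β => convex_iInter fun γ =>
    convex_iInter fun _ => convex_halfSpace_le (linForm α β).isLinear γ

theorem isCompact_splitClosure {C : Set ((Fin p → ℝ) × (Fin q → ℝ))} (hC : IsCompact C) :
    IsCompact (splitClosure C) :=
  hC.of_isClosed_subset (isClosed_splitClosure hC.isClosed) (splitClosure_subset C)

theorem splitIter_antitone (C : Set ((Fin p → ℝ) × (Fin q → ℝ))) : Antitone (splitIter C) :=
  antitone_nat_of_succ_le fun i => splitClosure_subset (splitIter C i)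

theorem isCompact_splitIter {C : Set ((Fin p → ℝ) × (Fin q → ℝ))} (hC : IsCompact C) (i : ℕ) :
    IsCompact (splitIter C i) := by
  induction i with
  | zero => exact hC
  | succ i ih => exact isCompact_splitClosure ih

theorem convex_splitIter {C : Set ((Fin p → ℝ) × (Fin q → ℝ))} (hC : Convex ℝ C) (i : ℕ) :
    Convex ℝ (splitIter C i) := by
  induction i with
  | zero => exact hC
  | succ i ih => exact convex_splitClosure ih

theorem IsIntVec.le_or_add_one_le {x : Fin p → ℝ} (hx : IsIntVec x) (d : Fin p → ℤ) (δ : ℤ) :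
    (∑ j, (d j : ℝ) * x j) ≤ δ ∨ (δ : ℝ) + 1 ≤ ∑ j, (d j : ℝ) * x j := by
  choose n hn using hx
  have hsum : (∑ j, (d j : ℝ) * x j) = ((∑ j, d j * n j : ℤ) : ℝ) := by
    push_cast
    simp only [hn]
  rw [hsum]
  rcases le_or_gt (∑ j, d j * n j) δ with h | h
  · exact Or.inl (by exact_mod_cast h)
  · exact Or.inr (by exact_mod_cast h)

theorem convexHull_subset_splitClosure {S C : Set ((Fin p → ℝ) × (Fin q → ℝ))}
    (hSC : convexHull ℝ S ⊆ C) (hS : ∀ z ∈ S, IsIntVec z.1) :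
    convexHull ℝ S ⊆ splitClosure C := fun _ hz =>
  ⟨hSC hz, fun α β γ ⟨d, δ, hcut⟩ =>
    convexHull_min (fun w hw => hcut w (hSC (subset_convexHull ℝ S hw))
      ((hS w hw).le_or_add_one_le d δ)) (convex_halfSpace_le (linForm α β).isLinear γ) hz⟩

theorem iInter_splitIter_subset_splitClosure {C : Set ((Fin p → ℝ) × (Fin q → ℝ))}
    (hC : IsCompact C) : ⋂ i, splitIter C i ⊆ splitClosure (⋂ i, splitIter C i) := by
  intro z hz
  refine ⟨hz, fun α β γ ⟨d, δ, hcut⟩ => le_of_forall_pos_le_add fun ε hε => ?_⟩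
  set g : (Fin p → ℝ) × (Fin q → ℝ) → ℝ := fun w => ∑ j, (d j : ℝ) * w.1 j
  have hg : Continuous g := by fun_prop
  set U := {w | linForm α β w < γ + ε} ∪ ({w | (δ : ℝ) < g w} ∩ {w | g w < δ + 1})
  have hU : IsOpen U := (isOpen_lt (continuous_linForm α β) continuous_const).union
    ((isOpen_lt continuous_const hg).inter (isOpen_lt hg continuous_const))
  have hQU : ⋂ i, splitIter C i ⊆ U := by
    intro w hw
    by_cases hsplit : g w ≤ δ ∨ (δ : ℝ) + 1 ≤ g w
    · exact Or.inl ((hcut w hw hsplit).trans_lt (lt_add_of_pos_right γ hε))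
    · push Not at hsplit
      exact Or.inr hsplit
  obtain ⟨i, hi⟩ :=
    (splitIter_antitone C).exists_subset_of_iInter_subset (isCompact_splitIter hC) hU hQU
  refine (mem_iInter.1 hz (i + 1)).2 α β (γ + ε) ⟨d, δ, fun w hw hsplit => ?_⟩
  rcases hi hw with hlt | ⟨hlo, hhi⟩
  · exact hlt.le
  · exact absurd hsplit (not_or.2 ⟨hlo.not_ge, hhi.not_ge⟩)

theorem splitClosure_subset_of_isClosed_of_convex {C W : Set ((Fin p → ℝ) × (Fin q → ℝ))}
    (hW : IsClosed W) (hWc : Convex ℝ W) (d : Fin p → ℤ) (δ : ℤ)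
    (hCW : ∀ w ∈ C, ((∑ j, (d j : ℝ) * w.1 j) ≤ δ ∨ (δ : ℝ) + 1 ≤ ∑ j, (d j : ℝ) * w.1 j) →
      w ∈ W) :
    splitClosure C ⊆ W := by
  intro z hz
  by_contra hzW
  obtain ⟨f, u, hfW, hfz⟩ := geometric_hahn_banach_closed_point hWc hW hzW
  obtain ⟨α, β, hαβ⟩ := exists_linForm_eq f.toLinearMap
  have hzu := (mem_splitClosure.1 hz).2 α β u ⟨d, δ, fun w hw hsplit => by
    rw [hαβ]
    exact (hfW w (hCW w hw hsplit)).le⟩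
  rw [hαβ] at hzu
  exact hzu.not_gt hfz

theorem isIntVec_of_mem_extremePoints {K : Set ((Fin p → ℝ) × (Fin q → ℝ))} (hKc : IsCompact K)
    (hKcv : Convex ℝ K) (hK : K ⊆ splitClosure K) {z : (Fin p → ℝ) × (Fin q → ℝ)}
    (hz : z ∈ extremePoints ℝ K) : IsIntVec z.1 := by
  intro j
  by_contra! hj
  set δ := ⌊z.1 j⌋
  have hlo : (δ : ℝ) < z.1 j := (Int.floor_le _).lt_of_ne (hj δ).symm
  have hhi : z.1 j < δ + 1 := Int.lt_floor_add_one _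
  have hcoord : ∀ w : (Fin p → ℝ) × (Fin q → ℝ),
      ∑ k, ((Pi.single j 1 : Fin p → ℤ) k : ℝ) * w.1 k = w.1 j := by
    simp [Pi.single_apply]
  let π : ((Fin p → ℝ) × (Fin q → ℝ)) →ₗ[ℝ] ℝ := LinearMap.proj j ∘ₗ LinearMap.fst ℝ _ _
  set K₀ := K ∩ {w | π w ≤ δ}
  set K₁ := K ∩ {w | (δ : ℝ) + 1 ≤ π w}
  have hπ : Continuous π := π.continuous_of_finiteDimensional
  have hW : IsCompact (convexHull ℝ (K₀ ∪ K₁)) :=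
    isCompact_convexHull_union (hKc.inter_right (isClosed_le hπ continuous_const))
      (hKc.inter_right (isClosed_le continuous_const hπ))
      (hKcv.inter (convex_halfSpace_le π.isLinear _))
      (hKcv.inter (convex_halfSpace_ge π.isLinear _))
  have hzW : z ∈ convexHull ℝ (K₀ ∪ K₁) :=
    splitClosure_subset_of_isClosed_of_convex hW.isClosed (convex_convexHull ℝ _) (Pi.single j 1)
      δ (fun w hw hsplit => subset_convexHull ℝ _ (by
        rw [hcoord] at hsplit
        exact hsplit.imp (fun h => ⟨hw, h⟩) fun h => ⟨hw, h⟩)) (hK hz.1)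
  rcases mem_of_mem_extremePoints_of_mem_convexHull
      (convexHull_min (union_subset inter_subset_left inter_subset_left) hKcv) hz hzW with h | h
  · exact h.2.not_gt hlo
  · exact h.2.not_gt hhi

theorem subset_closure_convexHull_isIntVec {K : Set ((Fin p → ℝ) × (Fin q → ℝ))}
    (hKc : IsCompact K) (hKcv : Convex ℝ K) (hK : K ⊆ splitClosure K) :
    K ⊆ closure (convexHull ℝ {z ∈ K | IsIntVec z.1}) := by
  conv_lhs => rw [← closure_convexHull_extremePoints hKc hKcv]
  exact closure_mono <| convexHull_mono fun z hz =>
    ⟨hz.1, isIntVec_of_mem_extremePoints hKc hKcv hK hz⟩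

variable {m : ℕ} (A : Matrix (Fin m) (Fin p) ℚ) (G : Matrix (Fin m) (Fin q) ℚ) (b : Fin m → ℚ)

theorem feasSet_eq_iInter :
    feasSet A G b = ⋂ i, {z | linForm (fun j => (A i j : ℝ)) (fun j => (G i j : ℝ)) z ≤ b i} := by
  ext z
  simp only [feasSet, linForm_apply, mem_ofPred_eq, mem_iInter]

theorem isClosed_feasSet : IsClosed (feasSet A G b) := by
  rw [feasSet_eq_iInter]
  exact isClosed_iInter fun i => isClosed_le (continuous_linForm _ _) continuous_const

theorem convex_feasSet : Convex ℝ (feasSet A G b) := by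
  rw [feasSet_eq_iInter]
  exact convex_iInter fun i => convex_halfSpace_le (linForm _ _).isLinear _

theorem mixedIntHull_subset_splitIter (i : ℕ) :
    mixedIntHull A G b ⊆ splitIter (feasSet A G b) i := by
  induction i with
  | zero => exact convexHull_min (sep_subset _ _) (convex_feasSet A G b)
  | succ i ih => exact convexHull_subset_splitClosure ih fun z hz => hz.2

theorem iInter_splitIter_subset_closure_mixedIntHull (hP : IsCompact (feasSet A G b)) :
    ⋂ i, splitIter (feasSet A G b) i ⊆ closure (mixedIntHull A G b) := by
  set Q := ⋂ i, splitIter (feasSet A G b) i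
  have hQ : IsCompact Q := hP.of_isClosed_subset
    (isClosed_iInter fun i => (isCompact_splitIter hP i).isClosed) (iInter_subset _ 0)
  have hQP : ∀ z ∈ Q, z ∈ feasSet A G b := fun z hz => mem_iInter.1 hz 0
  refine (subset_closure_convexHull_isIntVec hQ
    (convex_iInter fun i => convex_splitIter (convex_feasSet A G b) i)
    (iInter_splitIter_subset_splitClosure hP)).trans ?_
  exact closure_mono (convexHull_mono fun z hz => ⟨hQP z hz.1, hz.2⟩)

end

/-- The split closures approximate the mixed integer optimal value arbitrarily well. -/
theorem split_closure_value_approximates_mixed_integer_optimum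
    {p q m : ℕ} (A : Matrix (Fin m) (Fin p) ℚ) (G : Matrix (Fin m) (Fin q) ℚ) (b : Fin m → ℚ)
    (c : Fin p → ℚ) (h : Fin q → ℚ)
    (hbdd : Bornology.IsBounded (feasSet A G b))
    (hne : (mixedIntHull A G b).Nonempty) :
    ∀ ε > (0 : ℝ), ∃ i₀ : ℕ,
      |sSup ((fun z : (Fin p → ℝ) × (Fin q → ℝ) =>
            (∑ j, (c j : ℝ) * z.1 j) + (∑ j, (h j : ℝ) * z.2 j)) '' splitIter (feasSet A G b) i₀)
        - sSup ((fun z : (Fin p → ℝ) × (Fin q → ℝ) =>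
            (∑ j, (c j : ℝ) * z.1 j) + (∑ j, (h j : ℝ) * z.2 j)) '' mixedIntHull A G b)| < ε := by
  intro ε hε
  have hP : IsCompact (feasSet A G b) :=
    Metric.isCompact_of_isClosed_isBounded (isClosed_feasSet A G b) hbdd
  exact exists_abs_sSup_image_sub_lt (continuous_linForm (fun j => (c j : ℝ)) fun j => h j)
    (splitIter_antitone _) (isCompact_splitIter hP) hne (mixedIntHull_subset_splitIter A G b)
    (iInter_splitIter_subset_closure_mixedIntHull A G b hP) hε

end
end

section
/- Let p, q, m ∈ ℕ, let A ∈ ℚ^{m×p}, G ∈ ℚ^{m×q}, b ∈ ℚ^m, c ∈ ℚ^p, h ∈ ℚ^q, and let P := {(x,y) ∈ ℝ^p × ℝ^q : Ax + Gy ≤ b componentwise}. Let (x*,y*) ∈ P, set γ* := c·x* + h·y*, and suppose there exists ε > 0 such that c·x + h·y ≤ γ* − ε for every (x,y) ∈ P with x ∈ ℤ^p. Let V be a finite subset of ℚ^m × ℚ such that: every (u,s) ∈ V satisfies u ≥ 0, s ≥ 0, uᵀG = s·h, and uᵀA − s·c ∈ ℤ^p; and every (w,t) ∈ ℝ^m ×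 ℝ with w ≥ 0, t ≥ 0, wᵀG = t·h is a nonnegative linear combination of elements of V. For (u,s) ∈ V define d^{(u,s)} := uᵀA − s·c ∈ ℤ^p and δ^{(u,s)} := ⌊u·b − s·γ*⌋ + 1 ∈ ℤ. Then: (a) for every x ∈ ℤ^p there exists (u,s) ∈ V with d^{(u,s)}·x ≥ δ^{(u,s)}; and (b) for every (u,s) ∈ V, d^{(u,s)}·x* < δ^{(u,s)}. In particular, the family of inequalities d^{(u,s)}·x ≥ δ^{(u,s)}, (u,s) ∈ V, is a valid |V|-disjunction that does not contain x*. -/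
open Set

noncomputable section

/-!
For `(u, s)` in the projection cone, multiplying `Ax* + Gy* ≤ b` by `u ≥ 0` and using
`uᵀG = s h` gives `d·x* ≤ u·b - s γ* < δ`, which is (b). For (a), let `x` be integral. No `y`
lifts `x` to a point of `P` with objective at least `γ*`, so Farkas' lemma yields `(w, t)` in the
projection cone with `w·(b - Ax) < t (γ* - c·x)`. Writing `(w, t)` as a nonnegative combination
of `V`, some `(u, s) ∈ V` has `u·b - s γ* < d·x`; as `d·x` is an integer, `δ ≤ d·x`.
Farkas' lemma is proved algebraically, following Bartl, by induction on the number of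
inequalities.
-/

open Finset Matrix

theorem Finset.exists_nonneg_eq_sum_insert_smul {𝕜 M ι : Type*} [Semiring 𝕜] [PartialOrder 𝕜]
    [AddCommMonoid M] [Module 𝕜 M] [DecidableEq ι] {a : ι → M} {b : M} {s : Finset ι} {j : ι}
    (hj : j ∉ s) {l : ι → 𝕜} {c : 𝕜} (hl : 0 ≤ l) (hc : 0 ≤ c)
    (hb : b = c • a j + ∑ i ∈ s, l i • a i) :
    ∃ l' : ι → 𝕜, 0 ≤ l' ∧ b = ∑ i ∈ insert j s, l' i • a i := by
  refine ⟨Function.update l j c, fun i => ?_, ?_⟩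
  · rcases eq_or_ne i j with rfl | hij
    · simpa using hc
    · simpa [hij] using hl i
  · rw [sum_insert hj, Function.update_self, hb]
    congr 1
    exact sum_congr rfl fun i hi => by rw [Function.update_of_ne (ne_of_mem_of_not_mem hi hj)]

namespace Module.Dual

variable {𝕜 V ι : Type*} [Field 𝕜] [LinearOrder 𝕜] [IsStrictOrderedRing 𝕜]
  [AddCommGroup V] [Module 𝕜 V]

theorem apply_sub_div_smul (f g : Module.Dual 𝕜 V) (x x₀ : V) :
    f (x - (g x / g x₀) • x₀) = (f - (f x₀ / g x₀) • g) x := by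
  simp only [map_sub, map_smul, smul_eq_mul, LinearMap.sub_apply, LinearMap.smul_apply]
  ring

theorem farkas_bartl (a : ι → Module.Dual 𝕜 V) (b : Module.Dual 𝕜 V) (s : Finset ι)
    (hb : ∀ x, (∀ i ∈ s, a i x ≤ 0) → b x ≤ 0) :
    ∃ l : ι → 𝕜, 0 ≤ l ∧ b = ∑ i ∈ s, l i • a i := by
  classical
  induction s using Finset.induction_on generalizing a b with
  | empty =>
    refine ⟨0, le_rfl, LinearMap.ext fun x => ?_⟩
    have h₁ := hb x (by simp)
    have h₂ := hb (-x) (by simp)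
    simp only [map_neg, sum_empty, LinearMap.zero_apply] at h₂ ⊢
    linarith
  | insert j s hj ih =>
    by_cases hs : ∀ x, (∀ i ∈ s, a i x ≤ 0) → b x ≤ 0
    · obtain ⟨l, hl, hb⟩ := ih a b hs
      exact exists_nonneg_eq_sum_insert_smul hj hl le_rfl (by rw [hb, zero_smul, zero_add])
    push Not at hs
    obtain ⟨x₀, hx₀, hbx₀⟩ := hs
    have hj₀ : 0 < a j x₀ := by
      by_contra! hle
      exact hbx₀.not_ge (hb x₀ (forall_mem_insert _ _ _ |>.2 ⟨hle, hx₀⟩))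
    -- Moving `x` along `x₀` into `ker (a j)` eliminates the constraint `a j`.
    obtain ⟨l, hl, hb'⟩ := ih (fun i => a i - (a i x₀ / a j x₀) • a j)
      (b - (b x₀ / a j x₀) • a j) fun x hx => by
        rw [← apply_sub_div_smul]
        refine hb _ (forall_mem_insert _ _ _ |>.2 ⟨?_, fun i hi => ?_⟩)
        · rw [apply_sub_div_smul, div_self hj₀.ne', one_smul, sub_self, LinearMap.zero_apply]
        · rw [apply_sub_div_smul]; exact hx i hi
    have hsum : ∑ i ∈ s, l i * a i x₀ ≤ 0 :=
      sum_nonpos fun i hi => mul_nonpos_of_nonneg_of_nonpos (hl i) (hx₀ i hi)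
    refine exists_nonneg_eq_sum_insert_smul hj hl (div_nonneg (sub_nonneg.2 (hsum.trans hbx₀.le))
      hj₀.le) ?_
    have hc : (b x₀ - ∑ i ∈ s, l i * a i x₀) / a j x₀
        = b x₀ / a j x₀ - ∑ i ∈ s, l i * (a i x₀ / a j x₀) := by
      simp only [sub_div, sum_div, mul_div_assoc]
    calc b = (b - (b x₀ / a j x₀) • a j) + (b x₀ / a j x₀) • a j := (sub_add_cancel _ _).symm
      _ = _ := by
        rw [hb', hc]
        simp only [smul_sub, sum_sub_distrib, smul_smul, ← sum_smul]
        module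

end Module.Dual

namespace Matrix

variable {𝕜 ι κ μ α : Type*} [Field 𝕜] [LinearOrder 𝕜] [IsStrictOrderedRing 𝕜]
  [Fintype ι] [Fintype κ] [Fintype μ]

theorem exists_nonneg_vecMul_eq_smul_of_not_exists (G : Matrix ι κ 𝕜) (h : κ → 𝕜)
    (r : ι → 𝕜) (ρ : 𝕜) (hno : ¬∃ y, G *ᵥ y ≤ r ∧ ρ ≤ h ⬝ᵥ y) :
    ∃ (w : ι → 𝕜) (t : 𝕜), 0 ≤ w ∧ 0 ≤ t ∧ w ᵥ* G = t • h ∧ w ⬝ᵥ r < t * ρ := by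
  classical
  -- Homogenize: `(y, t)` with `t > 0` stands for the solution `t⁻¹ • y`.
  let dot (v : κ → 𝕜) : Module.Dual 𝕜 ((κ → 𝕜) × 𝕜) :=
    dotProductBilin 𝕜 𝕜 v ∘ₗ LinearMap.fst 𝕜 _ _
  let τ := LinearMap.snd 𝕜 (κ → 𝕜) 𝕜
  let a (o : Option ι) : Module.Dual 𝕜 ((κ → 𝕜) × 𝕜) :=
    o.elim (ρ • τ - dot h) fun i => dot (G i) - r i • τ
  have ha : ∀ z, (∀ o ∈ Finset.univ, a o z ≤ 0) → τ z ≤ 0 := by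
    rintro ⟨y, t⟩ hz
    by_contra! ht
    replace ht : 0 < t := ht
    refine hno ⟨t⁻¹ • y, fun i => ?_, ?_⟩
    · have hi : G i ⬝ᵥ y - r i * t ≤ 0 := hz (some i) (Finset.mem_univ _)
      rw [mulVec_smul, Pi.smul_apply, smul_eq_mul, inv_mul_le_iff₀ ht, mul_comm]
      exact sub_nonpos.1 hi
    · have hnone : ρ * t - h ⬝ᵥ y ≤ 0 := hz none (Finset.mem_univ _)
      rw [dotProduct_smul, smul_eq_mul, le_inv_mul_iff₀ ht, mul_comm]
      exact sub_nonpos.1 hnone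
  obtain ⟨l, hl, hτ⟩ := Module.Dual.farkas_bartl a τ Finset.univ ha
  have key (y : κ → 𝕜) (t : 𝕜) :
      t = l none * (ρ * t - h ⬝ᵥ y) + ∑ i, l (some i) * (G i ⬝ᵥ y - r i * t) := by
    have := LinearMap.congr_fun hτ (y, t)
    simp only [Fintype.sum_option, LinearMap.add_apply, LinearMap.coe_sum, Finset.sum_apply,
      LinearMap.smul_apply, smul_eq_mul] at this
    exact this
  refine ⟨fun i => l (some i), l none, fun i => hl _, hl _, funext fun j => ?_, ?_⟩
  · have hj := key (Pi.single j 1) 0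
    simp only [dotProduct_single, mul_zero, sub_zero, mul_one] at hj
    simp only [vecMul, dotProduct, Pi.smul_apply, smul_eq_mul]
    linarith
  · have h01 := key 0 1
    simp only [dotProduct_zero, mul_one, zero_sub, mul_neg, sum_neg_distrib] at h01
    simp only [dotProduct]
    linarith

variable (A : Matrix ι κ 𝕜) (G : Matrix ι μ 𝕜) (b : ι → 𝕜) (c : κ → 𝕜) (h : μ → 𝕜)

theorem vecMul_sub_smul_dotProduct_le {x : κ → 𝕜} {y : μ → 𝕜} (hxy : A *ᵥ x + G *ᵥ y ≤ b)
    {u : ι → 𝕜} {s : 𝕜} (hu : 0 ≤ u) (huG : u ᵥ* G = s • h) :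
    (u ᵥ* A - s • c) ⬝ᵥ x ≤ u ⬝ᵥ b - s * (c ⬝ᵥ x + h ⬝ᵥ y) := by
  have := dotProduct_le_dotProduct_of_nonneg_left hxy hu
  rw [dotProduct_add, dotProduct_mulVec, dotProduct_mulVec, huG, smul_dotProduct,
    smul_eq_mul] at this
  rw [sub_dotProduct, smul_dotProduct, smul_eq_mul]
  linarith

theorem exists_lt_vecMul_sub_smul_dotProduct {V : Finset α} (U : α → ι → 𝕜) (S : α → 𝕜)
    (hV : ∀ (w : ι → 𝕜) (t : 𝕜), 0 ≤ w → 0 ≤ t → w ᵥ* G = t • h →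
      ∃ l : α → 𝕜, 0 ≤ l ∧ w = ∑ v ∈ V, l v • U v ∧ t = ∑ v ∈ V, l v * S v)
    {x : κ → 𝕜} {γ : 𝕜} (hx : ¬∃ y, A *ᵥ x + G *ᵥ y ≤ b ∧ γ ≤ c ⬝ᵥ x + h ⬝ᵥ y) :
    ∃ v ∈ V, U v ⬝ᵥ b - S v * γ < (U v ᵥ* A - S v • c) ⬝ᵥ x := by
  have hno : ¬∃ y, G *ᵥ y ≤ b - A *ᵥ x ∧ γ - c ⬝ᵥ x ≤ h ⬝ᵥ y := by
    rintro ⟨y, hy, hγ⟩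
    exact hx ⟨y, by rwa [add_comm, ← le_sub_iff_add_le], by linarith⟩
  obtain ⟨w, t, hw, ht, hwG, hlt⟩ := exists_nonneg_vecMul_eq_smul_of_not_exists G h _ _ hno
  obtain ⟨l, hl, rfl, rfl⟩ := hV w t hw ht hwG
  by_contra! hle
  have : (∑ v ∈ V, l v * S v) * (γ - c ⬝ᵥ x) ≤ (∑ v ∈ V, l v • U v) ⬝ᵥ (b - A *ᵥ x) := by
    rw [sum_dotProduct, sum_mul]
    refine sum_le_sum fun v hv => ?_
    rw [smul_dotProduct, smul_eq_mul, mul_assoc]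
    refine mul_le_mul_of_nonneg_left ?_ (hl v)
    have := hle v hv
    rw [dotProduct_sub, dotProduct_mulVec]
    rw [sub_dotProduct, smul_dotProduct, smul_eq_mul] at this
    linarith
  linarith

end Matrix
theorem Int.cast_floor_add_one_le_of_lt {a z : ℝ} (hz : ∃ n : ℤ, z = n) (h : a < z) :
    ((⌊a⌋ + 1 : ℤ) : ℝ) ≤ z := by
  obtain ⟨n, rfl⟩ := hz
  exact_mod_cast Int.floor_lt.mpr h

theorem Matrix.exists_dotProduct_intCast_eq {κ : Type*} [Fintype κ] {d : κ → ℝ}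
    (hd : ∀ j, ∃ n : ℤ, d j = n) (x : κ → ℤ) : ∃ N : ℤ, d ⬝ᵥ (fun j => (x j : ℝ)) = N := by
  choose n hn using hd
  exact ⟨n ⬝ᵥ x, by simp [dotProduct, hn]⟩

theorem not_exists_lift_of_forall_le_sub {p q m : ℕ} {A : Matrix (Fin m) (Fin p) ℚ}
    {G : Matrix (Fin m) (Fin q) ℚ} {b : Fin m → ℚ} {c : Fin p → ℚ} {h : Fin q → ℚ} {γ : ℝ}
    (heps : ∃ ε > (0 : ℝ), ∀ z ∈ feasSet A G b, IsIntVec z.1 →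
      (∑ j, (c j : ℝ) * z.1 j) + (∑ j, (h j : ℝ) * z.2 j) ≤ γ - ε) (x : Fin p → ℤ) :
    ¬∃ y, A.map (↑) *ᵥ (fun j => (x j : ℝ)) + G.map (↑) *ᵥ y ≤ (↑) ∘ b ∧
      γ ≤ ((↑) ∘ c) ⬝ᵥ (fun j => (x j : ℝ)) + ((↑) ∘ h) ⬝ᵥ y := by
  rintro ⟨y, hy, hobj⟩
  obtain ⟨ε, hε, hbound⟩ := heps
  have := hbound ((fun j => (x j : ℝ)), y) hy fun j => ⟨x j, rfl⟩
  simp only [dotProduct, Function.comp_apply] at hobj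
  linarith

/-- The rounded projection inequalities built from the extreme rays of the projection cone form a
valid `|V|`-disjunction which does not contain the point `x*`. -/
theorem projection_disjunction_valid_and_misses_apex
    {p q m : ℕ} (A : Matrix (Fin m) (Fin p) ℚ) (G : Matrix (Fin m) (Fin q) ℚ) (b : Fin m → ℚ)
    (c : Fin p → ℚ) (h : Fin q → ℚ)
    (xstar : Fin p → ℝ) (ystar : Fin q → ℝ) (hP : (xstar, ystar) ∈ feasSet A G b)
    (γstar : ℝ) (hγ : γstar = (∑ j, (c j : ℝ) * xstar j) + (∑ j, (h j : ℝ) * ystar j))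
    (heps : ∃ ε > (0 : ℝ), ∀ z ∈ feasSet A G b, IsIntVec z.1 →
      (∑ j, (c j : ℝ) * z.1 j) + (∑ j, (h j : ℝ) * z.2 j) ≤ γstar - ε)
    (V : Finset ((Fin m → ℚ) × ℚ))
    (hV : ∀ v ∈ V, (∀ i, 0 ≤ v.1 i) ∧ 0 ≤ v.2 ∧
      (∀ j, (∑ i, v.1 i * G i j) = v.2 * h j) ∧
      (∀ j, ∃ n : ℤ, (∑ i, v.1 i * A i j) - v.2 * c j = (n : ℚ)))
    (hVgen : ∀ (w : Fin m → ℝ) (t : ℝ), (∀ i, 0 ≤ w i) → 0 ≤ t →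
      (∀ j, (∑ i, w i * (G i j : ℝ)) = t * (h j : ℝ)) →
      ∃ lam : ((Fin m → ℚ) × ℚ) → ℝ, (∀ v, 0 ≤ lam v) ∧
        (∀ i, w i = ∑ v ∈ V, lam v * (v.1 i : ℝ)) ∧ t = ∑ v ∈ V, lam v * (v.2 : ℝ)) :
    (∀ x : Fin p → ℤ, ∃ v ∈ V,
      ((⌊(∑ i, (v.1 i : ℝ) * (b i : ℝ)) - (v.2 : ℝ) * γstar⌋ + 1 : ℤ) : ℝ) ≤
        ∑ j, ((∑ i, (v.1 i : ℝ) * (A i j : ℝ)) - (v.2 : ℝ) * (c j : ℝ)) * (x j : ℝ)) ∧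
    (∀ v ∈ V,
      (∑ j, ((∑ i, (v.1 i : ℝ) * (A i j : ℝ)) - (v.2 : ℝ) * (c j : ℝ)) * xstar j) <
        ((⌊(∑ i, (v.1 i : ℝ) * (b i : ℝ)) - (v.2 : ℝ) * γstar⌋ + 1 : ℤ) : ℝ)) := by
  have hgen : ∀ (w : Fin m → ℝ) (t : ℝ), 0 ≤ w → 0 ≤ t → w ᵥ* G.map (↑) = t • ((↑) ∘ h) →
      ∃ l : (Fin m → ℚ) × ℚ → ℝ, 0 ≤ l ∧ w = ∑ v ∈ V, l v • (fun i => (v.1 i : ℝ)) ∧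
        t = ∑ v ∈ V, l v * v.2 := by
    intro w t hw ht hwG
    obtain ⟨l, hl, hlw, hlt⟩ := hVgen w t hw ht (congrFun hwG)
    exact ⟨l, hl, funext fun i => by simpa [Finset.sum_apply] using hlw i, hlt⟩
  refine ⟨fun x => ?_, fun v hv => ?_⟩
  · obtain ⟨v, hv, hlt⟩ := exists_lt_vecMul_sub_smul_dotProduct _ _ _ _ _
      (fun (v : (Fin m → ℚ) × ℚ) i => (v.1 i : ℝ)) (fun v => (v.2 : ℝ)) hgen
      (not_exists_lift_of_forall_le_sub heps x)
    obtain ⟨-, -, -, hint⟩ := hV v hv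
    refine ⟨v, hv, Int.cast_floor_add_one_le_of_lt (exists_dotProduct_intCast_eq
      (fun j => (hint j).imp fun n hn => ?_) x) hlt⟩
    exact_mod_cast hn
  · obtain ⟨hu, -, hG, -⟩ := hV v hv
    have hvG : (fun i => (v.1 i : ℝ)) ᵥ* G.map (↑) = (v.2 : ℝ) • ((↑) ∘ h) :=
      funext fun j => (by exact_mod_cast hG j : ∑ i, (v.1 i : ℝ) * G i j = v.2 * h j)
    have hle := vecMul_sub_smul_dotProduct_le (A.map (Rat.cast : ℚ → ℝ)) (G.map Rat.cast)
      (Rat.cast ∘ b) (Rat.cast ∘ c) (Rat.cast ∘ h) hP (fun i => Rat.cast_nonneg.mpr (hu i)) hvG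
    calc _ ≤ ∑ i, (v.1 i : ℝ) * (b i : ℝ) - v.2 * γstar := by rw [hγ]; exact hle
      _ < _ := Int.lt_floor_add_one _
      _ = _ := by push_cast; rfl
end
end

section
/- Let p, q, m ∈ ℕ, let A ∈ ℚ^{m×p}, G ∈ ℚ^{m×q}, b ∈ ℚ^m, c ∈ ℚ^p, h ∈ ℚ^q, and let P := {(x,y) ∈ ℝ^p × ℝ^q : Ax + Gy ≤ b componentwise} and P_I := conv({(x,y) ∈ P : x ∈ ℤ^p}). Let (x*,y*) ∈ P, set γ* := c·x* + h·y*, and suppose there exists ε > 0 such that c·x + h·y ≤ γ* − ε for every (x,y) ∈ P with x ∈ ℤ^p. Let V be a finite subset of ℚ^m × ℚ such that: every (u,s) ∈ V satisfies u ≥ 0, s ≥ 0, uᵀG = s·h, and uᵀA − s·c ∈ ℤ^p; and every (w,t) ∈ ℝ^m × ℝ with w ≥ 0, t ≥ 0, wᵀG = t·h is a nonnegative linear combination of elements of V. For (u,s) ∈ V define δ^{(u,s)} := ⌊u·b − s·γ*⌋ + 1, and for (u,s) ∈ V with s > 0 define γ^{(u,s)} := (u·b − δ^{(u,s)})/s.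 Assume {(u,s) ∈ V : s > 0} is nonempty and set γ̂ := max{γ^{(u,s)} : (u,s) ∈ V, s > 0}. Then c·x + h·y ≤ γ̂ for every (x,y) ∈ P_I, and c·x* + h·y* > γ̂. -/
/-!
Let `(x, y) ∈ P` with `x` integral and suppose `c ⬝ x + h ⬝ y > γ̂`. For every generator `(u, s)`
of the projection cone, `uᵀA x - s c ⬝ x` is an integer, and aggregating `Ax + Gy ≤ b` with `u`
bounds it by `u ⬝ b - s (c ⬝ x + h ⬝ y)`, which the violated cut pushes below
`⌊u ⬝ b - s γ*⌋ + 1`; rounding gives `uᵀA x - s c ⬝ x ≤ u ⬝ b - s γ*`. These inequalities pass to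
all of the projection cone by conic combination, and then Farkas' lemma completes `x` to a point
`(x, y') ∈ P` with `c ⬝ x + h ⬝ y' ≥ γ*`, against the gap `ε`. Convexity extends validity to `P_I`,
and `⌊a⌋ + 1 > a` puts the apex strictly beyond every cut. Farkas' lemma itself is separation from
a finitely generated cone, closed by conic Carathéodory.
-/

open Set

noncomputable section

open Matrix

section ConicCaratheodory

variable {ι E : Type*} [AddCommGroup E] [Module ℝ E]

/-- Moving along a linear relation until the first coefficient hits zero. -/
theorem exists_sum_erase_smul_eq_of_sum_smul_eq_zero [DecidableEq ι] {v : ι → E}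
    {s : Finset ι} {c g : ι → ℝ} (hc : ∀ i ∈ s, 0 ≤ c i) (hg : ∑ i ∈ s, g i • v i = 0)
    (hpos : ∃ i ∈ s, 0 < g i) :
    ∃ j ∈ s, ∃ c' : ι → ℝ, (∀ i ∈ s.erase j, 0 ≤ c' i) ∧
      ∑ i ∈ s.erase j, c' i • v i = ∑ i ∈ s, c i • v i := by
  obtain ⟨j, hj, hmin⟩ := Finset.exists_min_image (s.filter (0 < g ·)) (fun i => c i / g i)
    (by simpa [Finset.Nonempty] using hpos)
  rw [Finset.mem_filter] at hj
  set t := c j / g j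
  have ht : 0 ≤ t := div_nonneg (hc j hj.1) hj.2.le
  refine ⟨j, hj.1, fun i => c i - t * g i, fun i hi => ?_, ?_⟩
  · have hi := Finset.mem_of_mem_erase hi
    rcases le_or_gt (g i) 0 with hgi | hgi
    · nlinarith [hc i hi]
    · have := hmin i (Finset.mem_filter.mpr ⟨hi, hgi⟩)
      rw [le_div_iff₀ hgi] at this
      linarith
  · rw [Finset.sum_erase _ (by simp [t, div_mul_cancel₀ _ hj.2.ne'])]
    simp only [sub_smul, Finset.sum_sub_distrib, mul_smul, ← Finset.smul_sum, hg, smul_zero,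
      sub_zero]

theorem exists_linearIndepOn_sum_smul_eq [DecidableEq ι] (v : ι → E) (s : Finset ι)
    (c : ι → ℝ) (hc : ∀ i ∈ s, 0 ≤ c i) :
    ∃ t ⊆ s, LinearIndepOn ℝ v t ∧ ∃ c' : ι → ℝ, (∀ i ∈ t, 0 ≤ c' i) ∧
      ∑ i ∈ t, c' i • v i = ∑ i ∈ s, c i • v i := by
  induction s using Finset.strongInduction generalizing c with
  | H s ih =>
  by_cases hli : LinearIndepOn ℝ v s
  · exact ⟨s, subset_rfl, hli, c, hc, rfl⟩
  obtain ⟨g, hg, i, hi, hgi⟩ : ∃ g : ι → ℝ, ∑ i ∈ s, g i • v i = 0 ∧ ∃ i ∈ s, 0 < g i := by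
    simp only [linearIndepOn_finset_iff, not_forall] at hli
    obtain ⟨g, hg, i, hi, hgi⟩ := hli
    rcases lt_or_gt_of_ne hgi with hneg | hpos
    · exact ⟨-g, by simp [neg_smul, hg], i, hi, by simpa using hneg⟩
    · exact ⟨g, hg, i, hi, hpos⟩
  obtain ⟨j, hj, c', hc', heq⟩ := exists_sum_erase_smul_eq_of_sum_smul_eq_zero hc hg ⟨i, hi, hgi⟩
  obtain ⟨t, hts, htli, c'', hc'', heq'⟩ := ih _ (Finset.erase_ssubset hj) c' hc'
  exact ⟨t, hts.trans (Finset.erase_subset _ _), htli, c'', hc'', heq'.trans heq⟩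

end ConicCaratheodory

section ClosedCone

variable {E : Type*} [AddCommGroup E] [Module ℝ E]

theorem PointedCone.mem_hull_range_iff {ι : Type*} [Fintype ι] {v : ι → E} {x : E} :
    x ∈ PointedCone.hull ℝ (range v) ↔ ∃ c : ι → ℝ, 0 ≤ c ∧ ∑ i, c i • v i = x := by
  rw [Submodule.mem_span_range_iff_exists_fun]
  constructor
  · rintro ⟨c, rfl⟩
    exact ⟨fun i => c i, fun i => (c i).2, rfl⟩
  · rintro ⟨c, hc, rfl⟩
    exact ⟨fun i => ⟨c i, hc i⟩, rfl⟩

variable [TopologicalSpace E] [IsTopologicalAddGroup E] [ContinuousSMul ℝ E] [T2Space E]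

theorem LinearIndependent.isClosed_hull_range {ι : Type*} [Fintype ι] {v : ι → E}
    (hv : LinearIndependent ℝ v) : IsClosed (PointedCone.hull ℝ (range v) : Set E) := by
  have hL : Topology.IsClosedEmbedding (Fintype.linearCombination ℝ v) :=
    LinearMap.isClosedEmbedding_of_injective (LinearMap.ker_eq_bot.mpr
      (linearIndependent_iff_injective_fintypeLinearCombination.mp hv))
  convert hL.isClosedMap _ (isClosed_Ici (a := (0 : ι → ℝ))) using 1
  ext x
  simp [PointedCone.mem_hull_range_iff, Fintype.linearCombination_apply]

/-- By conic Carathéodory, a finitely generated cone is a finite union of cones over linearly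
independent families. -/
theorem PointedCone.isClosed_hull_range {ι : Type*} [Fintype ι] (v : ι → E) :
    IsClosed (PointedCone.hull ℝ (range v) : Set E) := by
  classical
  suffices h : (PointedCone.hull ℝ (range v) : Set E) =
      ⋃ t ∈ {t : Finset ι | LinearIndepOn ℝ v t}, PointedCone.hull ℝ (range fun i : t => v i) by
    rw [h]
    exact (Set.toFinite _).isClosed_biUnion fun t ht => LinearIndependent.isClosed_hull_range ht
  refine subset_antisymm (fun x hx => ?_) (iUnion₂_subset fun t _ => ?_)
  · obtain ⟨c, hc, rfl⟩ := PointedCone.mem_hull_range_iff.mp hx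
    obtain ⟨t, -, ht, c', hc', heq⟩ :=
      exists_linearIndepOn_sum_smul_eq v Finset.univ c fun i _ => hc i
    refine mem_biUnion (x := t) ht (PointedCone.mem_hull_range_iff.mpr
      ⟨fun i => c' i, fun i => hc' i i.2, ?_⟩)
    rw [Finset.sum_coe_sort t fun i => c' i • v i, heq]
  · exact Submodule.span_mono (range_comp_subset_range _ _)

end ClosedCone

section Farkas

theorem LinearMap.apply_eq_dotProduct {κ R : Type*} [CommSemiring R] [Fintype κ]
    [DecidableEq κ] (f : (κ → R) →ₗ[R] R) (x : κ → R) :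
    f x = (fun i => f (Pi.single i 1)) ⬝ᵥ x := by
  conv_lhs => rw [← Finset.univ_sum_single x]
  simp only [map_sum, dotProduct]
  refine Finset.sum_congr rfl fun i _ => ?_
  rw [show Pi.single i (x i) = x i • Pi.single i (1 : R) by simp [← Pi.single_smul'], map_smul,
    smul_eq_mul, mul_comm]

/-- **Farkas' lemma**. -/
theorem Matrix.exists_mulVec_le_of_forall_nonneg {ι κ : Type*} [Fintype ι] [Fintype κ]
    (M : Matrix ι κ ℝ) (d : ι → ℝ) (h : ∀ u, 0 ≤ u → u ᵥ* M = 0 → 0 ≤ u ⬝ᵥ d) :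
    ∃ y, M *ᵥ y ≤ d := by
  classical
  by_contra hd
  -- `{M y + r | r ≥ 0}` is the cone generated by the columns of `±M` and the unit vectors
  let gens : (κ ⊕ κ) ⊕ ι → ι → ℝ :=
    Sum.elim (Sum.elim (fun j i => M i j) (fun j i => -M i j)) (fun i => Pi.single i 1)
  let C : ProperCone ℝ (ι → ℝ) :=
    ⟨PointedCone.hull ℝ (range gens), PointedCone.isClosed_hull_range gens⟩
  have hdC : d ∉ C := by
    intro hdC
    obtain ⟨c, hc, hcd⟩ := PointedCone.mem_hull_range_iff.mp hdC
    refine hd ⟨fun j => c (.inl (.inl j)) - c (.inl (.inr j)), fun i => ?_⟩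
    have := congrFun hcd i
    simp only [Finset.sum_apply, Pi.smul_apply, smul_eq_mul, Fintype.sum_sum_type, Sum.elim_inl,
      Sum.elim_inr, mul_neg, Finset.sum_neg_distrib, Pi.single_apply, mul_ite, mul_one, mul_zero,
      Finset.sum_ite_eq, Finset.mem_univ, ↓reduceIte, gens] at this
    simp only [mulVec, dotProduct, mul_comm (M i _), sub_mul, Finset.sum_sub_distrib]
    linarith [show 0 ≤ c (.inr i) from hc _]
  obtain ⟨f, hfC, hfd⟩ := C.hyperplane_separation_point hdC
  set u : ι → ℝ := fun i => f (Pi.single i 1)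
  have hfu (x : ι → ℝ) : f x = u ⬝ᵥ x := LinearMap.apply_eq_dotProduct (f : (ι → ℝ) →ₗ[ℝ] ℝ) x
  have hgen (g) : 0 ≤ u ⬝ᵥ gens g := hfu (gens g) ▸ hfC _ (PointedCone.subset_hull ⟨g, rfl⟩)
  have hu : 0 ≤ u := fun i => by simpa [gens] using hgen (.inr i)
  have huM : u ᵥ* M = 0 := by
    ext j
    have h1 : 0 ≤ (u ᵥ* M) j := hgen (.inl (.inl j))
    have h2 : 0 ≤ u ⬝ᵥ -(fun i => M i j) := hgen (.inl (.inr j))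
    rw [dotProduct_neg] at h2
    exact le_antisymm (neg_nonneg.mp h2) h1
  have := h u hu huM
  rw [hfu] at hfd
  linarith

variable {μ κ : Type*} [Fintype μ] [Fintype κ]

/-- The certificates `(w, t)` of this form of Farkas' lemma are the projection cone of `(G, h)`. -/
theorem Matrix.exists_mulVec_le_and_le_dotProduct (G : Matrix μ κ ℝ) (h : κ → ℝ) (r : μ → ℝ)
    (γ : ℝ) (H : ∀ w t, 0 ≤ w → 0 ≤ t → w ᵥ* G = t • h → t * γ ≤ w ⬝ᵥ r) :
    ∃ y, G *ᵥ y ≤ r ∧ γ ≤ h ⬝ᵥ y := by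
  obtain ⟨y, hy⟩ := (G.fromRows (replicateRow Unit (-h))).exists_mulVec_le_of_forall_nonneg
    (Sum.elim r fun _ => -γ) fun u hu huM => by
      have := H (u ∘ Sum.inl) (u (.inr ())) (fun i => hu _) (hu _) ?_
      · rw [← Sum.elim_comp_inl_inr u, sumElim_dotProduct_sumElim]
        simp only [dotProduct_pUnit, Function.comp_apply, mul_neg, le_add_neg_iff_add_le, zero_add]
        exact this
      · rw [vecMul_fromRows, add_eq_zero_iff_eq_neg] at huM
        rw [huM]
        ext j
        simp [vecMul, dotProduct]
  refine ⟨y, fun i => by simpa [fromRows_mulVec] using hy (.inl i), ?_⟩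
  simpa [fromRows_mulVec, replicateRow_mulVec_eq_const] using hy (.inr ())

theorem Matrix.exists_mulVec_le_and_le_dotProduct_of_generators {β : Type*}
    (G : Matrix μ κ ℝ) (h : κ → ℝ) (r : μ → ℝ) (γ : ℝ) (V : Finset β) (U : β → μ → ℝ)
    (S : β → ℝ) (hgen : ∀ w t, 0 ≤ w → 0 ≤ t → w ᵥ* G = t • h →
      ∃ lam : β → ℝ, 0 ≤ lam ∧ w = ∑ v ∈ V, lam v • U v ∧ t = ∑ v ∈ V, lam v * S v)
    (hV : ∀ v ∈ V, S v * γ ≤ U v ⬝ᵥ r) :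
    ∃ y, G *ᵥ y ≤ r ∧ γ ≤ h ⬝ᵥ y := by
  refine G.exists_mulVec_le_and_le_dotProduct h r γ fun w t hw ht hwG => ?_
  obtain ⟨lam, hlam, rfl, rfl⟩ := hgen w t hw ht hwG
  rw [Finset.sum_mul, sum_dotProduct]
  exact Finset.sum_le_sum fun v hv => by
    rw [mul_assoc, smul_dotProduct, smul_eq_mul]
    exact mul_le_mul_of_nonneg_left (hV v hv) (hlam v)

end Farkas

section DisjunctiveCut

theorem sub_floor_add_one_div_lt {a s γ : ℝ} (hs : 0 < s) :
    (a - (⌊a - s * γ⌋ + 1 : ℤ)) / s < γ := by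
  rw [div_lt_iff₀ hs]
  push_cast
  linarith [Int.lt_floor_add_one (a - s * γ)]

theorem le_sub_mul_of_sub_floor_add_one_div_lt {α a s γ θ : ℝ} (hα : ∃ n : ℤ, α = n)
    (hs : 0 < s) (hagg : α + s * θ ≤ a) (hθ : (a - (⌊a - s * γ⌋ + 1 : ℤ)) / s < θ) :
    α ≤ a - s * γ := by
  obtain ⟨n, rfl⟩ := hα
  rw [div_lt_iff₀ hs] at hθ
  have : (n : ℝ) < (⌊a - s * γ⌋ + 1 : ℤ) := by linarith
  exact Int.le_floor.mp (Int.lt_add_one_iff.mp (Int.cast_lt.mp this))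

variable {μ ι κ : Type*} [Fintype μ] [Fintype ι] [Fintype κ]

/-- Chvátal–Gomory rounding of the `u`-aggregate of `A x + G y ≤ b`, against a violated cut. -/
theorem mul_sub_dotProduct_le_dotProduct_sub_mulVec {A : Matrix μ ι ℝ} {G : Matrix μ κ ℝ}
    {b : μ → ℝ} {c : ι → ℝ} {h : κ → ℝ} {x : ι → ℝ} {y : κ → ℝ} {u : μ → ℝ} {s γ : ℝ}
    (hxy : A *ᵥ x + G *ᵥ y ≤ b) (hu : 0 ≤ u) (hs : 0 ≤ s) (huG : u ᵥ* G = s • h)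
    (hint : ∃ n : ℤ, (u ᵥ* A) ⬝ᵥ x - s * (c ⬝ᵥ x) = n)
    (hθ : 0 < s → (u ⬝ᵥ b - (⌊u ⬝ᵥ b - s * γ⌋ + 1 : ℤ)) / s < c ⬝ᵥ x + h ⬝ᵥ y) :
    s * (γ - c ⬝ᵥ x) ≤ u ⬝ᵥ (b - A *ᵥ x) := by
  have hagg : (u ᵥ* A) ⬝ᵥ x + s * (h ⬝ᵥ y) ≤ u ⬝ᵥ b := by
    have := dotProduct_le_dotProduct_of_nonneg_left hxy hu
    rwa [dotProduct_add, dotProduct_mulVec, dotProduct_mulVec, huG, smul_dotProduct,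
      smul_eq_mul] at this
  rw [dotProduct_sub, dotProduct_mulVec]
  rcases hs.eq_or_lt with rfl | hs
  · linarith
  · have := le_sub_mul_of_sub_floor_add_one_div_lt hint hs (by linarith) (hθ hs)
    linarith

theorem convex_setOf_dotProduct_add_le (a : ι → ℝ) (b : κ → ℝ) (γ : ℝ) :
    Convex ℝ {z : (ι → ℝ) × (κ → ℝ) | a ⬝ᵥ z.1 + b ⬝ᵥ z.2 ≤ γ} :=
  convex_halfSpace_le ⟨fun z w => by simp only [Prod.fst_add, Prod.snd_add, dotProduct_add]; ring,
    fun r z => by simp only [Prod.smul_fst, Prod.smul_snd, dotProduct_smul, smul_eq_mul]; ring⟩ γ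

end DisjunctiveCut

theorem mem_feasSet_iff {p q m : ℕ} {A : Matrix (Fin m) (Fin p) ℚ}
    {G : Matrix (Fin m) (Fin q) ℚ} {b : Fin m → ℚ} {z : (Fin p → ℝ) × (Fin q → ℝ)} :
    z ∈ feasSet A G b ↔ A.map (↑) *ᵥ z.1 + G.map (↑) *ᵥ z.2 ≤ fun i => (b i : ℝ) :=
  Iff.rfl

theorem IsIntVec.exists_dotProduct_eq_intCast {p : ℕ} {a x : Fin p → ℝ} (ha : IsIntVec a)
    (hx : IsIntVec x) : ∃ n : ℤ, a ⬝ᵥ x = n := by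
  choose na hna using ha
  choose nx hnx using hx
  exact ⟨∑ j, na j * nx j, by simp [dotProduct, hna, hnx]⟩

section RatCast

variable {m p q : ℕ} {u : Fin m → ℚ} {s : ℚ}

theorem vecMul_map_ratCast_eq_smul {G : Matrix (Fin m) (Fin q) ℚ} {h : Fin q → ℚ}
    (huG : ∀ j, ∑ i, u i * G i j = s * h j) :
    (fun i => (u i : ℝ)) ᵥ* G.map (↑) = (s : ℝ) • fun j => (h j : ℝ) := by
  ext j
  simpa [vecMul, dotProduct] using congrArg ((↑) : ℚ → ℝ) (huG j)

theorem exists_vecMul_map_ratCast_dotProduct_sub_eq_intCast {A : Matrix (Fin m) (Fin p) ℚ}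
    {c : Fin p → ℚ} (hint : ∀ j, ∃ n : ℤ, ∑ i, u i * A i j - s * c j = n) {x : Fin p → ℝ}
    (hx : IsIntVec x) :
    ∃ n : ℤ, ((fun i => (u i : ℝ)) ᵥ* A.map (↑)) ⬝ᵥ x - s * ((fun j => (c j : ℝ)) ⬝ᵥ x) = n := by
  have hint' : IsIntVec ((fun i => (u i : ℝ)) ᵥ* A.map (↑) - (s : ℝ) • fun j => (c j : ℝ)) :=
    fun j => by
      obtain ⟨n, hn⟩ := hint j
      exact ⟨n, by simpa [vecMul, dotProduct] using congrArg ((↑) : ℚ → ℝ) hn⟩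
  rw [← smul_eq_mul, ← smul_dotProduct, ← sub_dotProduct]
  exact hint'.exists_dotProduct_eq_intCast hx

end RatCast

theorem projection_disjunctive_cut_valid_and_cuts_off_apex_general
    {p q m : ℕ} (A : Matrix (Fin m) (Fin p) ℚ) (G : Matrix (Fin m) (Fin q) ℚ) (b : Fin m → ℚ)
    (c : Fin p → ℚ) (h : Fin q → ℚ)
    (xstar : Fin p → ℝ) (ystar : Fin q → ℝ)
    (γstar : ℝ) (hγ : γstar = (∑ j, (c j : ℝ) * xstar j) + (∑ j, (h j : ℝ) * ystar j))
    (heps : ∃ ε > (0 : ℝ), ∀ z ∈ feasSet A G b, IsIntVec z.1 →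
      (∑ j, (c j : ℝ) * z.1 j) + (∑ j, (h j : ℝ) * z.2 j) ≤ γstar - ε)
    (V : Finset ((Fin m → ℚ) × ℚ))
    (hV : ∀ v ∈ V, (∀ i, 0 ≤ v.1 i) ∧ 0 ≤ v.2 ∧
      (∀ j, (∑ i, v.1 i * G i j) = v.2 * h j) ∧
      (∀ j, ∃ n : ℤ, (∑ i, v.1 i * A i j) - v.2 * c j = (n : ℚ)))
    (hVgen : ∀ (w : Fin m → ℝ) (t : ℝ), (∀ i, 0 ≤ w i) → 0 ≤ t →
      (∀ j, (∑ i, w i * (G i j : ℝ)) = t * (h j : ℝ)) →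
      ∃ lam : ((Fin m → ℚ) × ℚ) → ℝ, (∀ v, 0 ≤ lam v) ∧
        (∀ i, w i = ∑ v ∈ V, lam v * (v.1 i : ℝ)) ∧ t = ∑ v ∈ V, lam v * (v.2 : ℝ))
    (γhat : ℝ)
    (hγhat : IsGreatest {r : ℝ | ∃ v ∈ V, 0 < v.2 ∧
      r = ((∑ i, (v.1 i : ℝ) * (b i : ℝ)) -
          ((⌊(∑ i, (v.1 i : ℝ) * (b i : ℝ)) - (v.2 : ℝ) * γstar⌋ + 1 : ℤ) : ℝ)) / (v.2 : ℝ)}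
      γhat) :
    (∀ z ∈ mixedIntHull A G b,
      (∑ j, (c j : ℝ) * z.1 j) + (∑ j, (h j : ℝ) * z.2 j) ≤ γhat) ∧
    γhat < (∑ j, (c j : ℝ) * xstar j) + (∑ j, (h j : ℝ) * ystar j) := by
  obtain ⟨ε, hε, hle⟩ := heps
  have hcut : γhat < γstar := by
    obtain ⟨v, -, hv, rfl⟩ := hγhat.1
    exact sub_floor_add_one_div_lt (Rat.cast_pos.mpr hv)
  refine ⟨fun z hz => convexHull_min (fun z hz => ?_)
    (convex_setOf_dotProduct_add_le (fun j => (c j : ℝ)) (fun j => (h j : ℝ)) γhat) hz, hγ ▸ hcut⟩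
  obtain ⟨hzP, hzI⟩ := hz
  rw [mem_ofPred_eq]
  by_contra! hθ
  obtain ⟨y, hy, hγy⟩ := exists_mulVec_le_and_le_dotProduct_of_generators (G.map (↑))
    (fun j => (h j : ℝ)) ((fun i => (b i : ℝ)) - A.map (↑) *ᵥ z.1)
    (γstar - (fun j => (c j : ℝ)) ⬝ᵥ z.1) V (fun v i => v.1 i) (fun v => v.2)
    (fun w t hw ht hwG => by
      obtain ⟨lam, hlam, hw, ht⟩ := hVgen w t hw ht (congrFun hwG)
      exact ⟨lam, hlam, funext fun i => by simp [hw, Finset.sum_apply], ht⟩)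
    (fun v hv => by
      obtain ⟨hu, hs, huG, hint⟩ := hV v hv
      exact mul_sub_dotProduct_le_dotProduct_sub_mulVec (mem_feasSet_iff.mp hzP)
        (fun i => Rat.cast_nonneg.mpr (hu i)) (Rat.cast_nonneg.mpr hs)
        (vecMul_map_ratCast_eq_smul huG)
        (exists_vecMul_map_ratCast_dotProduct_sub_eq_intCast hint hzI)
        fun hs => (hγhat.2 ⟨v, hv, Rat.cast_pos.mp hs, rfl⟩).trans_lt hθ)
  have hyP : (z.1, y) ∈ feasSet A G b := mem_feasSet_iff.mpr fun i => le_sub_iff_add_le'.mp (hy i)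
  have := hle _ hyP hzI
  change (fun j => (c j : ℝ)) ⬝ᵥ z.1 + (fun j => (h j : ℝ)) ⬝ᵥ y ≤ γstar - ε at this
  linarith

/-- The disjunctive cut `c·x + h·y ≤ γ̂` obtained from the projection cone rays is valid for
`P_I` and cuts off the current LP solution `(x*,y*)`. -/
theorem projection_disjunctive_cut_valid_and_cuts_off_apex
    {p q m : ℕ} (A : Matrix (Fin m) (Fin p) ℚ) (G : Matrix (Fin m) (Fin q) ℚ) (b : Fin m → ℚ)
    (c : Fin p → ℚ) (h : Fin q → ℚ)
    (xstar : Fin p → ℝ) (ystar : Fin q → ℝ) (hP : (xstar, ystar) ∈ feasSet A G b)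
    (γstar : ℝ) (hγ : γstar = (∑ j, (c j : ℝ) * xstar j) + (∑ j, (h j : ℝ) * ystar j))
    (heps : ∃ ε > (0 : ℝ), ∀ z ∈ feasSet A G b, IsIntVec z.1 →
      (∑ j, (c j : ℝ) * z.1 j) + (∑ j, (h j : ℝ) * z.2 j) ≤ γstar - ε)
    (V : Finset ((Fin m → ℚ) × ℚ))
    (hV : ∀ v ∈ V, (∀ i, 0 ≤ v.1 i) ∧ 0 ≤ v.2 ∧
      (∀ j, (∑ i, v.1 i * G i j) = v.2 * h j) ∧
      (∀ j, ∃ n : ℤ, (∑ i, v.1 i * A i j) - v.2 * c j = (n : ℚ)))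
    (hVgen : ∀ (w : Fin m → ℝ) (t : ℝ), (∀ i, 0 ≤ w i) → 0 ≤ t →
      (∀ j, (∑ i, w i * (G i j : ℝ)) = t * (h j : ℝ)) →
      ∃ lam : ((Fin m → ℚ) × ℚ) → ℝ, (∀ v, 0 ≤ lam v) ∧
        (∀ i, w i = ∑ v ∈ V, lam v * (v.1 i : ℝ)) ∧ t = ∑ v ∈ V, lam v * (v.2 : ℝ))
    (hpos : ∃ v ∈ V, 0 < v.2)
    (γhat : ℝ)
    (hγhat : IsGreatest {r : ℝ | ∃ v ∈ V, 0 < v.2 ∧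
      r = ((∑ i, (v.1 i : ℝ) * (b i : ℝ)) -
          ((⌊(∑ i, (v.1 i : ℝ) * (b i : ℝ)) - (v.2 : ℝ) * γstar⌋ + 1 : ℤ) : ℝ)) / (v.2 : ℝ)}
      γhat) :
    (∀ z ∈ mixedIntHull A G b,
      (∑ j, (c j : ℝ) * z.1 j) + (∑ j, (h j : ℝ) * z.2 j) ≤ γhat) ∧
    γhat < (∑ j, (c j : ℝ) * xstar j) + (∑ j, (h j : ℝ) * ystar j) :=
  projection_disjunctive_cut_valid_and_cuts_off_apex_general A G b c h xstar ystar γstar hγ heps V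
    hV hVgen γhat hγhat
end
end

section
/- Let p, q, m ∈ ℕ, let A ∈ ℚ^{m×p}, G ∈ ℚ^{m×q}, b ∈ ℚ^m, c ∈ ℚ^p, h ∈ ℚ^q, and let P := {(x,y) ∈ ℝ^p × ℝ^q : Ax + Gy ≤ b componentwise} and P_I := conv({(x,y) ∈ P : x ∈ ℤ^p}). Let γ* ∈ ℚ be such that c·x + h·y ≤ γ* for every (x,y) ∈ P with x ∈ ℤ^p, while c·x + h·y > γ* for some (x,y) ∈ P. Let V be a finite subset of ℚ^m × ℚ such that: every (u,s) ∈ V satisfies u ≥ 0, s ≥ 0, uᵀG = s·h, and uᵀA − s·c ∈ ℤ^p; and every (w,t) ∈ ℝ^m × ℝ with w ≥ 0, t ≥ 0, wᵀG = t·h is a nonnegative linear combination of elements of V. For (u,s) ∈ V define δ^{(u,s)} := ⌈u·b − s·γ*⌉, and for (u,s) ∈ V with s > 0 define γ^{(u,s)} := (u·b − δ^{(u,s)})/s. Assume {(u,s) ∈ V : s > 0} is nonempty and set γ̂ := max{γ^{(u,s)} : (u,s) ∈ V, s > 0}. Then c·x + h·y ≤ γ̂ for every (x,y) ∈ P_I.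 -/
/-!
Fix a point `(x, y)` of `P` with `x` integral and put `d = b - A x`. Every `y'` with `G y' ≤ d`
satisfies `h ⬝ y' ≤ γ* - c ⬝ x`, so by LP duality (Farkas' lemma, via Fourier–Motzkin
elimination) this bound is certified, up to any `ε > 0`, by some `w ≥ 0` with `wᵀ G = h`.
Decomposing `(w, 1)` along the generators `V` of the projection cone and taking `ε` small shows
that a single generator `(u, s)` with `s > 0` certifies it exactly:
`u ⬝ (b - A x) ≤ s (γ* - c ⬝ x)`. As `(uᵀ A - s c) ⬝ x` is an integer, this survives rounding
up, and aggregating `A x + G y ≤ b` with `u` gives `s (c ⬝ x + h ⬝ y) ≤ u ⬝ b - ⌈u ⬝ b - s γ*⌉`,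
that is `c ⬝ x + h ⬝ y ≤ γ^(u,s) ≤ γ̂`. The bound is linear, so it passes to the convex hull.
-/

open Set

noncomputable section

universe u

open Matrix

theorem Finite.exists_between_of_forall_le {α I K : Type*} [LinearOrder α] [Nonempty α]
    [Finite I] [Finite K] (L : K → α) (U : I → α) (h : ∀ k i, L k ≤ U i) :
    ∃ t, (∀ k, L k ≤ t) ∧ ∀ i, t ≤ U i := by
  rcases isEmpty_or_nonempty I with _ | _
  · rcases isEmpty_or_nonempty K with _ | _
    · exact ⟨Classical.arbitrary α, isEmptyElim, isEmptyElim⟩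
    · obtain ⟨k₀, hk₀⟩ := Finite.exists_max L
      exact ⟨L k₀, hk₀, isEmptyElim⟩
  · obtain ⟨i₀, hi₀⟩ := Finite.exists_min U
    exact ⟨U i₀, fun k => h k i₀, hi₀⟩

theorem Matrix.mulVec_snoc {ι R : Type*} [Fintype ι] [CommSemiring R] {n : ℕ}
    (M : Matrix ι (Fin (n + 1)) R) (y : Fin n → R) (t : R) :
    M *ᵥ Fin.snoc y t = M.submatrix id Fin.castSucc *ᵥ y + t • fun i => M i (Fin.last n) := by
  ext i
  simp [mulVec, dotProduct, Fin.sum_univ_castSucc, mul_comm]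

section LinearOrderedField

variable {𝕜 : Type*} [Field 𝕜] [LinearOrder 𝕜]

namespace FourierMotzkin

variable {ι : Type*} [DecidableEq ι] {n : ℕ} (M : Matrix ι (Fin (n + 1)) 𝕜)

abbrev Row : Type _ :=
  {i // M i (Fin.last n) = 0} ⊕ ({i // 0 < M i (Fin.last n)} × {i // M i (Fin.last n) < 0})

/-- Elimination of the last unknown: row `r` of the eliminated system is `combination M r ᵥ* M`,
a row of `M` with vanishing last coefficient, or the combination of a row with positive and a row
with negative last coefficient in which that coefficient cancels. -/
def combination : Matrix (Row M) ι 𝕜 := fun r => match r with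
  | .inl i => Pi.single i.1 1
  | .inr (i, k) => Pi.single i.1 (-M k.1 (Fin.last n)) + Pi.single k.1 (M i.1 (Fin.last n))

variable {M}

theorem combination_nonneg [IsStrictOrderedRing 𝕜] (r : Row M) : 0 ≤ combination M r := by
  rcases r with i | ⟨i, k⟩
  · exact Pi.single_nonneg.2 zero_le_one
  · exact add_nonneg (Pi.single_nonneg.2 (neg_nonneg.2 k.2.le)) (Pi.single_nonneg.2 i.2.le)

variable [Fintype ι]

theorem combination_inl_dotProduct (i : {i // M i (Fin.last n) = 0}) (v : ι → 𝕜) :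
    combination M (.inl i) ⬝ᵥ v = v i := by
  simp [combination]

theorem combination_inr_dotProduct (i : {i // 0 < M i (Fin.last n)})
    (k : {i // M i (Fin.last n) < 0}) (v : ι → 𝕜) :
    combination M (.inr (i, k)) ⬝ᵥ v = -M k (Fin.last n) * v i + M i (Fin.last n) * v k := by
  simp [combination, add_dotProduct]

theorem combination_mul_apply_last (r : Row M) : (combination M * M) r (Fin.last n) = 0 := by
  rw [mul_apply']
  rcases r with i | ⟨i, k⟩
  · exact (combination_inl_dotProduct i _).trans i.2
  · rw [combination_inr_dotProduct]
    ring

end FourierMotzkin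

variable [IsStrictOrderedRing 𝕜]

theorem exists_add_smul_le {ι : Type*} [Finite ι] {a r d : ι → 𝕜}
    (hzero : ∀ i, a i = 0 → r i ≤ d i)
    (hpair : ∀ i k, 0 < a i → a k < 0 → -a k * r i + a i * r k ≤ -a k * d i + a i * d k) :
    ∃ t : 𝕜, r + t • a ≤ d := by
  obtain ⟨t, hlow, hupp⟩ := Finite.exists_between_of_forall_le
    (fun k : {k // a k < 0} => (r k - d k) / -a k) (fun i : {i // 0 < a i} => (d i - r i) / a i)
    fun ⟨k, hk⟩ ⟨i, hi⟩ => by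
      rw [div_le_div_iff₀ (neg_pos.2 hk) hi]
      linarith [hpair i k hi hk]
  refine ⟨t, fun i => ?_⟩
  simp only [Pi.add_apply, Pi.smul_apply, smul_eq_mul]
  rcases lt_trichotomy (a i) 0 with hi | hi | hi
  · have hti := hlow ⟨i, hi⟩
    rw [div_le_iff₀ (neg_pos.2 hi)] at hti
    linarith
  · simpa [hi] using hzero i hi
  · have hti := hupp ⟨i, hi⟩
    rw [le_div_iff₀ hi] at hti
    linarith

theorem FourierMotzkin.exists_mulVec_snoc_le {ι : Type*} [Fintype ι] [DecidableEq ι] {n : ℕ}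
    {M : Matrix ι (Fin (n + 1)) 𝕜} {d : ι → 𝕜} {y : Fin n → 𝕜}
    (hy : (combination M * M.submatrix id Fin.castSucc) *ᵥ y ≤ combination M *ᵥ d) :
    ∃ t, M *ᵥ Fin.snoc y t ≤ d := by
  rw [← mulVec_mulVec] at hy
  simp only [mulVec_snoc]
  refine exists_add_smul_le (fun i hi => ?_) fun i k hi hk => ?_
  · simpa only [mulVec, combination_inl_dotProduct] using hy (.inl ⟨i, hi⟩)
  · simpa only [mulVec, combination_inr_dotProduct] using hy (.inr (⟨i, hi⟩, ⟨k, hk⟩))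

theorem Matrix.exists_nonneg_vecMul_eq_zero_of_not_exists_mulVec_le :
    ∀ {n : ℕ} {ι : Type u} [Fintype ι] (M : Matrix ι (Fin n) 𝕜) (d : ι → 𝕜),
      (¬ ∃ y, M *ᵥ y ≤ d) → ∃ u, 0 ≤ u ∧ u ᵥ* M = 0 ∧ u ⬝ᵥ d < 0
  | 0, ι, _, M, d, h => by
    classical
    obtain ⟨i, hi⟩ : ∃ i, d i < 0 := by
      simpa [Pi.le_def] using fun h' => h ⟨0, h'⟩
    exact ⟨Pi.single i 1, Pi.single_nonneg.2 zero_le_one, Subsingleton.elim _ _, by simpa⟩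
  | n + 1, ι, _, M, d, h => by
    classical
    set C := FourierMotzkin.combination M
    obtain ⟨u, hu, huM, hud⟩ :=
      exists_nonneg_vecMul_eq_zero_of_not_exists_mulVec_le (C * M.submatrix id Fin.castSucc)
        (C *ᵥ d) fun ⟨_, hy⟩ =>
          let ⟨_, ht⟩ := FourierMotzkin.exists_mulVec_snoc_le hy
          h ⟨_, ht⟩
    refine ⟨u ᵥ* C, fun i => Finset.sum_nonneg fun r _ =>
      mul_nonneg (hu r) (FourierMotzkin.combination_nonneg r i), ?_, ?_⟩
    · rw [vecMul_vecMul]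
      funext j
      refine Fin.lastCases ?_ (fun j => congrFun huM j) j
      simp [vecMul, dotProduct, C, FourierMotzkin.combination_mul_apply_last]
    · rwa [← dotProduct_mulVec]

theorem Matrix.exists_nonneg_vecMul_eq_dotProduct_lt {ι : Type*} [Fintype ι] {n : ℕ}
    {G : Matrix ι (Fin n) 𝕜} {d : ι → 𝕜} {h : Fin n → 𝕜} {δ : 𝕜}
    (hfeas : ∃ y, G *ᵥ y ≤ d) (hbound : ∀ y, G *ᵥ y ≤ d → h ⬝ᵥ y ≤ δ) {ε : 𝕜} (hε : 0 < ε) :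
    ∃ u, 0 ≤ u ∧ u ᵥ* G = h ∧ u ⬝ᵥ d < δ + ε := by
  obtain ⟨w, hw, hwM, hwd⟩ := exists_nonneg_vecMul_eq_zero_of_not_exists_mulVec_le
    (fromRows G (replicateRow Unit (-h))) (Sum.elim d fun _ => -(δ + ε)) fun ⟨y, hy⟩ => by
      have hhy := hy (.inr ())
      simp only [fromRows_mulVec, replicateRow_mulVec_eq_const, Sum.elim_inr,
        Function.const_apply, neg_dotProduct, neg_le_neg_iff] at hhy
      linarith [hbound y fun i => hy (.inl i)]
  set μ := w (.inr ())
  have hG : w ∘ Sum.inl ᵥ* G = μ • h := by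
    rw [vecMul_fromRows, add_eq_zero_iff_eq_neg] at hwM
    rw [hwM]
    ext j
    simp [vecMul, dotProduct, replicateRow_apply, μ]
  have hd : w ∘ Sum.inl ⬝ᵥ d < μ * (δ + ε) := by
    simp only [dotProduct, Fintype.sum_sum_type, Fintype.sum_unique, Sum.elim_inl,
      Sum.elim_inr] at hwd
    simp only [dotProduct, Function.comp_apply]
    linarith
  have hμ : 0 < μ := by
    refine (show 0 ≤ μ from hw _).lt_of_ne fun hμ => ?_
    obtain ⟨y, hy⟩ := hfeas
    have hwy := dotProduct_le_dotProduct_of_nonneg_left (w := w ∘ Sum.inl) hy fun i => hw (.inl i)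
    rw [dotProduct_mulVec, hG, ← hμ, zero_smul, zero_dotProduct] at hwy
    rw [← hμ, zero_mul] at hd
    exact hwy.not_gt hd
  refine ⟨μ⁻¹ • (w ∘ Sum.inl), smul_nonneg (inv_nonneg.2 hμ.le) fun i => hw _, ?_, ?_⟩
  · rw [smul_vecMul, hG, smul_smul, inv_mul_cancel₀ hμ.ne', one_smul]
  · rwa [smul_dotProduct, smul_eq_mul, inv_mul_lt_iff₀ hμ]

theorem Finset.exists_pos_forall_mul_le {α : Type*} (s : Finset α) {f g : α → 𝕜}
    (hf : ∀ a ∈ s, 0 ≤ f a) (hfg : ∀ a ∈ s, 0 < g a → 0 < f a) :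
    ∃ η > 0, ∀ a ∈ s, η * g a ≤ f a := by
  classical
  induction s using Finset.induction_on with
  | empty => exact ⟨1, one_pos, by simp⟩
  | insert a s _ ih =>
    simp only [mem_insert, forall_eq_or_imp] at hf hfg ⊢
    obtain ⟨η, hη, hs⟩ := ih hf.2 hfg.2
    rcases le_or_gt (g a) 0 with hga | hga
    · exact ⟨η, hη, by nlinarith [hf.1], hs⟩
    · have hfa := hfg.1 hga
      refine ⟨min η (f a / g a), lt_min hη (div_pos hfa hga), ?_, fun b hb => ?_⟩
      · exact (le_div_iff₀ hga).1 (min_le_right _ _)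
      · rcases le_or_gt (g b) 0 with hgb | hgb
        · nlinarith [hf.2 b hb, lt_min hη (div_pos hfa hga)]
        · exact (mul_le_mul_of_nonneg_right (min_le_left _ _) hgb.le).trans (hs b hb)

open Finset in
theorem exists_generator_dotProduct_le_mul {α ι : Type*} [Fintype ι] {n : ℕ}
    {G : Matrix ι (Fin n) 𝕜} {d : ι → 𝕜} {h : Fin n → 𝕜} {δ : 𝕜}
    (hfeas : ∃ y, G *ᵥ y ≤ d) (hbound : ∀ y, G *ᵥ y ≤ d → h ⬝ᵥ y ≤ δ)
    {V : Finset α} {u : α → ι → 𝕜} {s : α → 𝕜}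
    (hu : ∀ v ∈ V, 0 ≤ u v) (huG : ∀ v ∈ V, u v ᵥ* G = s v • h)
    (hgen : ∀ w, 0 ≤ w → w ᵥ* G = h → ∃ lam : α → 𝕜, (∀ v, 0 ≤ lam v) ∧
      w = ∑ v ∈ V, lam v • u v ∧ ∑ v ∈ V, lam v * s v = 1) :
    ∃ v ∈ V, 0 < s v ∧ u v ⬝ᵥ d ≤ s v * δ := by
  -- Otherwise every generator has slack at least `η * s v`, hence so has every dual solution.
  by_contra! hlt
  obtain ⟨y, hy⟩ := hfeas
  have hnonneg : ∀ v ∈ V, 0 ≤ u v ⬝ᵥ d - s v * δ := by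
    intro v hv
    rcases le_or_gt (s v) 0 with hs | hs
    · have hvy := dotProduct_le_dotProduct_of_nonneg_left hy (hu v hv)
      rw [dotProduct_mulVec, huG v hv, smul_dotProduct, smul_eq_mul] at hvy
      nlinarith [hbound y hy]
    · linarith [hlt v hv hs]
  obtain ⟨η, hη, hηV⟩ := V.exists_pos_forall_mul_le hnonneg fun v hv hs => sub_pos.2 (hlt v hv hs)
  obtain ⟨w, hw, hwG, hwd⟩ := exists_nonneg_vecMul_eq_dotProduct_lt ⟨y, hy⟩ hbound hη
  obtain ⟨lam, hlam, rfl, hlam1⟩ := hgen w hw hwG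
  have hslack : η ≤ (∑ v ∈ V, lam v • u v) ⬝ᵥ d - δ := calc
    η = ∑ v ∈ V, lam v * (η * s v) := by simp_rw [mul_left_comm _ η, ← mul_sum, hlam1, mul_one]
    _ ≤ ∑ v ∈ V, lam v * (u v ⬝ᵥ d - s v * δ) :=
      sum_le_sum fun v hv => mul_le_mul_of_nonneg_left (hηV v hv) (hlam v)
    _ = _ := by
      simp only [sum_dotProduct, smul_dotProduct, smul_eq_mul, mul_sub, sum_sub_distrib,
        ← mul_assoc, ← sum_mul, hlam1, one_mul]
  linarith

theorem dotProduct_add_dotProduct_le_sub_ceil_div [FloorRing 𝕜] {ι κ μ : Type*} [Fintype ι]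
    [Fintype κ] [Fintype μ] {A : Matrix ι κ 𝕜} {G : Matrix ι μ 𝕜} {b : ι → 𝕜} {c : κ → 𝕜}
    {h : μ → 𝕜} {x : κ → 𝕜} {y : μ → 𝕜} {u : ι → 𝕜} {s γ : 𝕜} {k : ℤ}
    (hxy : A *ᵥ x + G *ᵥ y ≤ b) (hu : 0 ≤ u) (huG : u ᵥ* G = s • h) (hs : 0 < s)
    (hk : (u ᵥ* A - s • c) ⬝ᵥ x = k) (hd : u ⬝ᵥ (b - A *ᵥ x) ≤ s * (γ - c ⬝ᵥ x)) :
    c ⬝ᵥ x + h ⬝ᵥ y ≤ (u ⬝ᵥ b - ⌈u ⬝ᵥ b - s * γ⌉) / s := by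
  have hux : u ⬝ᵥ (A *ᵥ x) = k + s * c ⬝ᵥ x := by
    rw [dotProduct_mulVec, ← hk, sub_dotProduct, smul_dotProduct, smul_eq_mul]
    ring
  have huy : u ⬝ᵥ (G *ᵥ y) = s * h ⬝ᵥ y := by
    rw [dotProduct_mulVec, huG, smul_dotProduct, smul_eq_mul]
  have hagg := dotProduct_le_dotProduct_of_nonneg_left hxy hu
  rw [dotProduct_add, hux, huy] at hagg
  rw [dotProduct_sub, hux] at hd
  have hceil : (⌈u ⬝ᵥ b - s * γ⌉ : 𝕜) ≤ k := by
    exact_mod_cast Int.ceil_le.2 (by linarith)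
  rw [le_div_iff₀ hs]
  linarith

end LinearOrderedField

theorem IsIntVec.exists_dotProduct_eq {p : ℕ} {a x : Fin p → ℝ} (ha : IsIntVec a)
    (hx : IsIntVec x) : ∃ k : ℤ, a ⬝ᵥ x = k := by
  choose na hna using ha
  choose nx hnx using hx
  exact ⟨∑ j, na j * nx j, by simp [dotProduct, hna, hnx]⟩

theorem isLinearMap_dotProduct_add_dotProduct {κ μ : Type*} [Fintype κ] [Fintype μ]
    (c : κ → ℝ) (h : μ → ℝ) : IsLinearMap ℝ fun z : (κ → ℝ) × (μ → ℝ) => c ⬝ᵥ z.1 + h ⬝ᵥ z.2 :=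
  ⟨fun _ _ => by simp only [Prod.fst_add, Prod.snd_add, dotProduct_add]; ring,
    fun _ _ => by simp only [Prod.smul_fst, Prod.smul_snd, dotProduct_smul, smul_eq_mul, mul_add]⟩

theorem Matrix.ratCast_vecMul_map {ι κ : Type*} [Fintype ι] (v : ι → ℚ) (M : Matrix ι κ ℚ) :
    (fun i => (v i : ℝ)) ᵥ* M.map (↑) = fun j => ((v ᵥ* M) j : ℝ) :=
  funext fun j => (RingHom.map_vecMul (Rat.castHom ℝ) M v j).symm

theorem Matrix.ratCast_vecMul_map_eq_smul {ι κ : Type*} [Fintype ι] {v : ι → ℚ}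
    {M : Matrix ι κ ℚ} {s : ℚ} {h : κ → ℚ} (hvM : ∀ j, ∑ i, v i * M i j = s * h j) :
    (fun i => (v i : ℝ)) ᵥ* M.map (↑) = (s : ℝ) • fun j => (h j : ℝ) := by
  rw [ratCast_vecMul_map]
  ext j
  simp [vecMul, dotProduct, hvM j]

theorem Matrix.isIntVec_ratCast_vecMul_map_sub_smul {m p : ℕ} {v : Fin m → ℚ}
    {A : Matrix (Fin m) (Fin p) ℚ} {s : ℚ} {c : Fin p → ℚ}
    (hvA : ∀ j, ∃ n : ℤ, ∑ i, v i * A i j - s * c j = n) :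
    IsIntVec ((fun i => (v i : ℝ)) ᵥ* A.map (↑) - (s : ℝ) • fun j => (c j : ℝ)) := fun j => by
  obtain ⟨n, hn⟩ := hvA j
  refine ⟨n, ?_⟩
  rw [ratCast_vecMul_map, Pi.sub_apply, Pi.smul_apply, smul_eq_mul]
  exact_mod_cast hn

theorem generalized_projection_disjunctive_cut_valid_general
    {p q m : ℕ} (A : Matrix (Fin m) (Fin p) ℚ) (G : Matrix (Fin m) (Fin q) ℚ) (b : Fin m → ℚ)
    (c : Fin p → ℚ) (h : Fin q → ℚ) (γstar : ℚ)
    (hvalid : ∀ z ∈ feasSet A G b, IsIntVec z.1 →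
      (∑ j, (c j : ℝ) * z.1 j) + (∑ j, (h j : ℝ) * z.2 j) ≤ (γstar : ℝ))
    (V : Finset ((Fin m → ℚ) × ℚ))
    (hV : ∀ v ∈ V, (∀ i, 0 ≤ v.1 i) ∧ 0 ≤ v.2 ∧
      (∀ j, (∑ i, v.1 i * G i j) = v.2 * h j) ∧
      (∀ j, ∃ n : ℤ, (∑ i, v.1 i * A i j) - v.2 * c j = (n : ℚ)))
    (hVgen : ∀ (w : Fin m → ℝ) (t : ℝ), (∀ i, 0 ≤ w i) → 0 ≤ t →
      (∀ j, (∑ i, w i * (G i j : ℝ)) = t * (h j : ℝ)) →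
      ∃ lam : ((Fin m → ℚ) × ℚ) → ℝ, (∀ v, 0 ≤ lam v) ∧
        (∀ i, w i = ∑ v ∈ V, lam v * (v.1 i : ℝ)) ∧ t = ∑ v ∈ V, lam v * (v.2 : ℝ))
    (γhat : ℚ)
    (hγhat : IsGreatest {r : ℚ | ∃ v ∈ V, 0 < v.2 ∧
      r = ((∑ i, v.1 i * b i) - ((⌈(∑ i, v.1 i * b i) - v.2 * γstar⌉ : ℤ) : ℚ)) / v.2}
      γhat) :
    ∀ z ∈ mixedIntHull A G b,
      (∑ j, (c j : ℝ) * z.1 j) + (∑ j, (h j : ℝ) * z.2 j) ≤ (γhat : ℝ) := by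
  intro z hz
  refine convexHull_min ?_ (convex_halfSpace_le (isLinearMap_dotProduct_add_dotProduct _ _) _) hz
  rintro ⟨x, y⟩ ⟨hxy, hx⟩
  have hxy' : A.map (↑) *ᵥ x + G.map (↑) *ᵥ y ≤ fun i => (b i : ℝ) := hxy
  have hu : ∀ v ∈ V, 0 ≤ fun i => (v.1 i : ℝ) := fun v hv i => Rat.cast_nonneg.2 ((hV v hv).1 i)
  have huG v (hv : v ∈ V) := ratCast_vecMul_map_eq_smul (hV v hv).2.2.1
  obtain ⟨v, hv, hs, hvd⟩ := exists_generator_dotProduct_le_mul (G := G.map (↑))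
    (d := (fun i => (b i : ℝ)) - A.map (↑) *ᵥ x) (δ := γstar - (fun j => (c j : ℝ)) ⬝ᵥ x)
    ⟨y, le_sub_iff_add_le'.2 hxy'⟩
    (fun y' hy' => le_sub_iff_add_le'.2 <| hvalid (x, y') (le_sub_iff_add_le'.1 hy') hx) hu huG
    fun w hw hwG => by
      obtain ⟨lam, hlam, hwV, h1⟩ := hVgen w 1 hw zero_le_one fun j => by
        rw [one_mul]; exact congrFun hwG j
      exact ⟨lam, hlam, funext fun i => by rw [hwV i, Finset.sum_apply]; rfl, h1.symm⟩
  obtain ⟨k, hk⟩ :=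
    (isIntVec_ratCast_vecMul_map_sub_smul (hV v hv).2.2.2).exists_dotProduct_eq hx
  calc _ ≤ _ := dotProduct_add_dotProduct_le_sub_ceil_div hxy' (hu v hv) (huG v hv) hs hk hvd
    _ = (((v.1 ⬝ᵥ b - ⌈v.1 ⬝ᵥ b - v.2 * γstar⌉) / v.2 : ℚ) : ℝ) := by
      rw [← Rat.ceil_cast (α := ℝ)]
      push_cast [dotProduct]
      rfl
    _ ≤ γhat := by exact_mod_cast hγhat.2 ⟨v, hv, by exact_mod_cast hs, rfl⟩

/-- The generalized (ceiling) disjunctive cut `c·x + h·y ≤ γ̂` is valid for `P_I` whenever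
`c·x + h·y ≤ γ*` is valid for `P_I` but not for `P`. -/
theorem generalized_projection_disjunctive_cut_valid
    {p q m : ℕ} (A : Matrix (Fin m) (Fin p) ℚ) (G : Matrix (Fin m) (Fin q) ℚ) (b : Fin m → ℚ)
    (c : Fin p → ℚ) (h : Fin q → ℚ) (γstar : ℚ)
    (hvalid : ∀ z ∈ feasSet A G b, IsIntVec z.1 →
      (∑ j, (c j : ℝ) * z.1 j) + (∑ j, (h j : ℝ) * z.2 j) ≤ (γstar : ℝ))
    (hnotP : ∃ z ∈ feasSet A G b,
      (γstar : ℝ) < (∑ j, (c j : ℝ) * z.1 j) + (∑ j, (h j : ℝ) * z.2 j))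
    (V : Finset ((Fin m → ℚ) × ℚ))
    (hV : ∀ v ∈ V, (∀ i, 0 ≤ v.1 i) ∧ 0 ≤ v.2 ∧
      (∀ j, (∑ i, v.1 i * G i j) = v.2 * h j) ∧
      (∀ j, ∃ n : ℤ, (∑ i, v.1 i * A i j) - v.2 * c j = (n : ℚ)))
    (hVgen : ∀ (w : Fin m → ℝ) (t : ℝ), (∀ i, 0 ≤ w i) → 0 ≤ t →
      (∀ j, (∑ i, w i * (G i j : ℝ)) = t * (h j : ℝ)) →
      ∃ lam : ((Fin m → ℚ) × ℚ) → ℝ, (∀ v, 0 ≤ lam v) ∧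
        (∀ i, w i = ∑ v ∈ V, lam v * (v.1 i : ℝ)) ∧ t = ∑ v ∈ V, lam v * (v.2 : ℝ))
    (hpos : ∃ v ∈ V, 0 < v.2)
    (γhat : ℚ)
    (hγhat : IsGreatest {r : ℚ | ∃ v ∈ V, 0 < v.2 ∧
      r = ((∑ i, v.1 i * b i) - ((⌈(∑ i, v.1 i * b i) - v.2 * γstar⌉ : ℤ) : ℚ)) / v.2}
      γhat) :
    ∀ z ∈ mixedIntHull A G b,
      (∑ j, (c j : ℝ) * z.1 j) + (∑ j, (h j : ℝ) * z.2 j) ≤ (γhat : ℝ) :=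
  generalized_projection_disjunctive_cut_valid_general A G b c h γstar hvalid V hV hVgen γhat hγhat
end
end

section
/- Let p, q, m ∈ ℕ, let A ∈ ℝ^{m×p}, G ∈ ℝ^{m×q}, b ∈ ℝ^m, and let P := {(x,y) ∈ ℝ^p × ℝ^q : Ax + Gy ≤ b componentwise}. Let V ⊆ ℝ^m be a finite set such that every v ∈ V satisfies v ≥ 0 and Gᵀv = 0, and such that every w ∈ ℝ^m with w ≥ 0 and Gᵀw = 0 is a nonnegative linear combination of elements of V. Then the projection of P onto the x-variables satisfies proj_X(P) = {x ∈ ℝ^p : v·(Ax) ≤ v·b for all v ∈ V}. -/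
/-!
Each `v ∈ V` kills the `y`-part of `Ax + Gy ≤ b`, which gives `⊆`. Conversely, by Farkas' lemma
`Gy ≤ b - Ax` is solvable unless some `w ≥ 0` with `Gᵀw = 0` has `w ⬝ (b - Ax) < 0`, and writing
`w` as a nonnegative combination of `V` rules this out. Farkas' lemma comes from separating a point
from a finitely generated cone, which is closed: by Carathéodory it is a finite union of images of
orthants under injective linear maps.
-/

open Set

noncomputable section

/-- Projection onto the space of integer variables. -/
def projX {p q : ℕ} (S : Set ((Fin p → ℝ) × (Fin q → ℝ))) : Set (Fin p → ℝ) :=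
  {x | ∃ y, (x, y) ∈ S}

section Caratheodory

variable {𝕜 ι E : Type*} [Field 𝕜] [LinearOrder 𝕜] [IsStrictOrderedRing 𝕜]
  [AddCommGroup E] [Module 𝕜 E] {g : ι → E} {s : Finset ι}

lemma exists_pos_of_not_linearIndepOn_finset (h : ¬LinearIndepOn 𝕜 g s) :
    ∃ f : ι → 𝕜, ∑ i ∈ s, f i • g i = 0 ∧ ∃ i ∈ s, 0 < f i := by
  obtain ⟨f, hf, i, hi, hfi⟩ := not_linearIndepOn_finset_iff.mp h
  rcases hfi.lt_or_gt with hneg | hpos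
  · exact ⟨-f, by simp [neg_smul, hf], i, hi, by simpa using hneg⟩
  · exact ⟨f, hf, i, hi, hpos⟩

/-- The witness is `lam - r • f` for the least ratio `r = lam j / f j` over `f j > 0`. -/
lemma exists_nonneg_sum_erase_smul_eq [DecidableEq ι] {lam f : ι → 𝕜} (hlam : ∀ i ∈ s, 0 ≤ lam i)
    (hf : ∑ i ∈ s, f i • g i = 0) (hpos : ∃ i ∈ s, 0 < f i) :
    ∃ j ∈ s, ∃ μ : ι → 𝕜, (∀ i ∈ s, 0 ≤ μ i) ∧
      ∑ i ∈ s.erase j, μ i • g i = ∑ i ∈ s, lam i • g i := by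
  obtain ⟨j, hjP, hj⟩ := (s.filter (0 < f ·)).exists_min_image (fun i => lam i / f i)
    (by simpa [Finset.filter_nonempty_iff] using hpos)
  obtain ⟨hjs, hfj⟩ := Finset.mem_filter.mp hjP
  set r := lam j / f j
  have hr : 0 ≤ r := div_nonneg (hlam j hjs) hfj.le
  refine ⟨j, hjs, fun i => lam i - r * f i, fun i hi => ?_, ?_⟩
  · by_cases hfi : 0 < f i
    · have := (le_div_iff₀ hfi).mp (hj i (Finset.mem_filter.mpr ⟨hi, hfi⟩))
      linarith
    · nlinarith [hlam i hi, mul_nonpos_of_nonneg_of_nonpos hr (not_lt.mp hfi)]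
  · calc ∑ i ∈ s.erase j, (lam i - r * f i) • g i
          = ∑ i ∈ s, (lam i - r * f i) • g i :=
            Finset.sum_erase _ (by simp [r, div_mul_cancel₀ _ hfj.ne'])
      _ = ∑ i ∈ s, lam i • g i - r • ∑ i ∈ s, f i • g i := by
            simp only [sub_smul, mul_smul, Finset.sum_sub_distrib, Finset.smul_sum]
      _ = ∑ i ∈ s, lam i • g i := by rw [hf, smul_zero, sub_zero]

variable (g) in
theorem exists_subset_linearIndepOn_nonneg_sum_smul_eq (lam : ι → 𝕜)
    (hlam : ∀ i ∈ s, 0 ≤ lam i) :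
    ∃ t ⊆ s, LinearIndepOn 𝕜 g t ∧ ∃ μ : ι → 𝕜, (∀ i ∈ t, 0 ≤ μ i) ∧
      ∑ i ∈ t, μ i • g i = ∑ i ∈ s, lam i • g i := by
  classical
  induction s using Finset.strongInduction generalizing lam with
  | H s ih =>
    by_cases hind : LinearIndepOn 𝕜 g s
    · exact ⟨s, subset_rfl, hind, lam, hlam, rfl⟩
    obtain ⟨f, hf, hpos⟩ := exists_pos_of_not_linearIndepOn_finset hind
    obtain ⟨j, hj, μ, hμ, hsum⟩ := exists_nonneg_sum_erase_smul_eq hlam hf hpos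
    obtain ⟨t, hts, ht, ν, hν, hνsum⟩ :=
      ih _ (s.erase_ssubset hj) μ fun i hi => hμ i (Finset.mem_of_mem_erase hi)
    exact ⟨t, hts.trans (s.erase_subset j), ht, ν, hν, hνsum.trans hsum⟩

end Caratheodory

section Farkas

variable {ι E : Type*} [Fintype ι] [NormedAddCommGroup E] [NormedSpace ℝ E]

theorem LinearIndependent.isClosed_image_fintypeLinearCombination_Ici {g : ι → E}
    (hg : LinearIndependent ℝ g) : IsClosed (Fintype.linearCombination ℝ g '' Ici 0) :=
  (LinearMap.isClosedEmbedding_of_injective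
    (LinearMap.ker_eq_bot.mpr hg.fintypeLinearCombination_injective)).isClosedMap _ isClosed_Ici

theorem isClosed_image_fintypeLinearCombination_Ici [FiniteDimensional ℝ E] (g : ι → E) :
    IsClosed (Fintype.linearCombination ℝ g '' Ici 0) := by
  classical
  have hunion : Fintype.linearCombination ℝ g '' Ici 0 =
      ⋃ (t : Finset ι) (_ : LinearIndepOn ℝ g t),
        Fintype.linearCombination ℝ (fun i : t => g i) '' Ici 0 := by
    ext x
    simp only [mem_image, mem_Ici, mem_iUnion, Fintype.linearCombination_apply, exists_prop]
    constructor
    · rintro ⟨lam, hlam, rfl⟩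
      obtain ⟨t, -, ht, μ, hμ, hsum⟩ :=
        exists_subset_linearIndepOn_nonneg_sum_smul_eq g (s := Finset.univ) lam fun i _ => hlam i
      exact ⟨t, ht, fun i => μ i, fun i => hμ i i.2,
        (Finset.sum_coe_sort t fun i => μ i • g i).trans hsum⟩
    · rintro ⟨t, -, u, hu, rfl⟩
      refine ⟨fun i => if h : i ∈ t then u ⟨i, h⟩ else 0, fun i => ?_, ?_⟩
      · dsimp only
        split_ifs
        exacts [hu _, le_rfl]
      · rw [← Finset.sum_subset (Finset.subset_univ t) fun i _ hi => by simp [hi],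
          ← Finset.sum_coe_sort t]
        exact Finset.sum_congr rfl fun i _ => by simp
  rw [hunion]
  exact isClosed_iUnion_of_finite fun t => isClosed_iUnion_of_finite fun ht =>
    LinearIndependent.isClosed_image_fintypeLinearCombination_Ici ht

theorem exists_nonneg_sum_smul_eq_of_forall_dual_nonneg [FiniteDimensional ℝ E] (g : ι → E)
    (c : E) (h : ∀ f : StrongDual ℝ E, (∀ i, 0 ≤ f (g i)) → 0 ≤ f c) :
    ∃ lam : ι → ℝ, 0 ≤ lam ∧ ∑ i, lam i • g i = c := by
  classical
  let K : ProperCone ℝ E :=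
    ⟨(PointedCone.positive ℝ (ι → ℝ)).map (Fintype.linearCombination ℝ g),
      isClosed_image_fintypeLinearCombination_Ici g⟩
  have hmem : ∀ x, x ∈ K ↔ ∃ lam : ι → ℝ, 0 ≤ lam ∧ ∑ i, lam i • g i = x := fun x => by
    change x ∈ (PointedCone.positive ℝ (ι → ℝ)).map (Fintype.linearCombination ℝ g) ↔ _
    simp [PointedCone.mem_map, Fintype.linearCombination_apply]
  by_contra hc
  obtain ⟨f, hfK, hfc⟩ := K.hyperplane_separation_point fun hcK => hc ((hmem c).mp hcK)
  refine hfc.not_ge (h f fun i => hfK _ ((hmem _).mpr ⟨Pi.single i 1, ?_, ?_⟩))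
  · exact Pi.single_nonneg.mpr zero_le_one
  · simp [Pi.single_apply]

end Farkas

namespace Matrix

theorem exists_mulVec_le_iff {m n : Type*} [Fintype m] [Fintype n]
    (G : Matrix m n ℝ) (c : m → ℝ) :
    (∃ y, G *ᵥ y ≤ c) ↔ ∀ w, 0 ≤ w → w ᵥ* G = 0 → 0 ≤ w ⬝ᵥ c := by
  classical
  constructor
  · rintro ⟨y, hy⟩ w hw hwG
    calc 0 = (w ᵥ* G) ⬝ᵥ y := by rw [hwG, zero_dotProduct]
      _ = w ⬝ᵥ (G *ᵥ y) := (dotProduct_mulVec w G y).symm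
      _ ≤ w ⬝ᵥ c := dotProduct_le_dotProduct_of_nonneg_left hy hw
  intro h
  -- `Gy ≤ c` says `c = G y⁺ + (-G) y⁻ + slack` with `y⁺, y⁻, slack ≥ 0`.
  let g : (n ⊕ n) ⊕ m → m → ℝ :=
    Sum.elim (Sum.elim (fun j => Gᵀ j) fun j => -Gᵀ j) fun i => Pi.single i 1
  obtain ⟨lam, hlam, hsum⟩ := exists_nonneg_sum_smul_eq_of_forall_dual_nonneg g c fun f hf => by
    set w : m → ℝ := fun i => f (Pi.single i 1)
    have hfw : ∀ z, f z = w ⬝ᵥ z := fun z => by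
      conv_lhs => rw [← Finset.univ_sum_single z]
      rw [map_sum, dotProduct]
      refine Finset.sum_congr rfl fun i _ => ?_
      rw [mul_comm, ← smul_eq_mul, ← map_smul, ← Pi.single_smul', smul_eq_mul, mul_one]
    have hwG : w ᵥ* G = 0 := funext fun j => by
      have hpos := hf (.inl (.inl j))
      have hneg := hf (.inl (.inr j))
      simp only [g, Sum.elim_inl, Sum.elim_inr, hfw, dotProduct_neg, neg_nonneg] at hpos hneg
      exact le_antisymm hneg hpos
    rw [hfw]
    exact h w (fun i => hf (.inr i)) hwG
  refine ⟨fun j => lam (.inl (.inl j)) - lam (.inl (.inr j)), fun i => ?_⟩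
  have hci := congrFun hsum i
  simp [g, Fintype.sum_sum_type, Pi.single_apply, mulVec, dotProduct, mul_sub,
    Finset.sum_sub_distrib, mul_comm] at hci ⊢
  linarith [show 0 ≤ lam (.inr i) from hlam _]

end Matrix

open Matrix

/-- Projection of a polyhedron onto the `x`-variables via the generators of the cone
`{v ≥ 0 : Gᵀv = 0}` (Farkas / Fourier–Motzkin). -/
theorem projX_eq_of_cone_generators
    {p q m : ℕ} (A : Matrix (Fin m) (Fin p) ℝ) (G : Matrix (Fin m) (Fin q) ℝ) (b : Fin m → ℝ)
    (V : Finset (Fin m → ℝ))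
    (hV : ∀ v ∈ V, (∀ i, 0 ≤ v i) ∧ ∀ j, (∑ i, v i * G i j) = 0)
    (hVgen : ∀ w : Fin m → ℝ, (∀ i, 0 ≤ w i) → (∀ j, (∑ i, w i * G i j) = 0) →
      ∃ lam : (Fin m → ℝ) → ℝ, (∀ v, 0 ≤ lam v) ∧ ∀ i, w i = ∑ v ∈ V, lam v * v i) :
    projX {z : (Fin p → ℝ) × (Fin q → ℝ) |
        ∀ i : Fin m, (∑ j, A i j * z.1 j) + (∑ j, G i j * z.2 j) ≤ b i} =
      {x : Fin p → ℝ | ∀ v ∈ V, (∑ i, v i * (∑ j, A i j * x j)) ≤ ∑ i, v i * b i} := by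
  ext x
  calc x ∈ projX _ ↔ ∃ y, G *ᵥ y ≤ b - A *ᵥ x :=
        by exact exists_congr fun y => forall_congr' fun i => le_sub_iff_add_le'.symm
    _ ↔ ∀ w, 0 ≤ w → w ᵥ* G = 0 → 0 ≤ w ⬝ᵥ (b - A *ᵥ x) := exists_mulVec_le_iff G _
    _ ↔ ∀ v ∈ V, 0 ≤ v ⬝ᵥ (b - A *ᵥ x) := by
        refine ⟨fun h v hv => h v (hV v hv).1 (funext (hV v hv).2), fun h w hw hwG => ?_⟩
        obtain ⟨lam, hlam, hw_eq⟩ := hVgen w hw (congrFun hwG)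
        have hw_sum : w = ∑ v ∈ V, lam v • v :=
          funext fun i => by simp [hw_eq i, Finset.sum_apply]
        rw [hw_sum, sum_dotProduct]
        exact Finset.sum_nonneg fun v hv => by
          rw [smul_dotProduct, smul_eq_mul]
          exact mul_nonneg (hlam v) (h v hv)
    _ ↔ x ∈ _ := forall₂_congr fun v _ => by rw [dotProduct_sub, sub_nonneg]; rfl

end
end

section
/- Let p ∈ ℕ and let S ⊆ ℤ^p (viewed as a subset of ℝ^p) be a set such that every point of S is an extreme point of the convex hull conv(S), and such that conv(S) ∩ ℤ^p ⊆ S. Then S is finite and has at most 2^p elements. -/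
/-!
Two integer vectors with the same coordinatewise parity have an integer midpoint. If both lie
in `S`, that midpoint lies in `conv S ∩ ℤ^p ⊆ S`, so it is an extreme point of `conv S` sitting
in the open segment between them, which forces them to coincide. Hence parity is injective on
`S`, and there are only `2^p` parity classes.
-/

open Set

noncomputable section

theorem eq_of_midpoint_mem_extremePoints {𝕜 E : Type*} [Ring 𝕜] [LinearOrder 𝕜]
    [IsStrictOrderedRing 𝕜] [Invertible (2 : 𝕜)] [AddCommGroup E] [Module 𝕜 E] {A : Set E}
    {x y : E} (hx : x ∈ A) (hy : y ∈ A) (hm : midpoint 𝕜 x y ∈ A.extremePoints 𝕜) : x = y :=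
  have ⟨hxm, hym⟩ := (mem_extremePoints.1 hm).2 x hx y hy (midpoint_mem_openSegment x y)
  hxm.trans hym.symm

theorem Int.exists_midpoint_eq_intCast_of_zmod_two_eq {a b : ℤ} (h : (a : ZMod 2) = b) :
    ∃ n : ℤ, midpoint ℝ (a : ℝ) b = n := by
  obtain ⟨k, hk⟩ := (ZMod.intCast_eq_intCast_iff_dvd_sub a b 2).1 h
  have hb : (b : ℝ) = a + 2 * k := by exact_mod_cast (by omega : b = a + 2 * k)
  refine ⟨a + k, ?_⟩
  rw [midpoint_eq_smul_add, hb, invOf_eq_inv, smul_eq_mul]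
  push_cast
  ring

-- Only its values on integer vectors matter, where `⌊x j⌋ = x j`.
def parityVec {p : ℕ} (x : Fin p → ℝ) : Fin p → ZMod 2 := fun j => ((⌊x j⌋ : ℤ) : ZMod 2)

theorem IsIntVec.midpoint {p : ℕ} {x y : Fin p → ℝ} (hx : IsIntVec x) (hy : IsIntVec y)
    (h : parityVec x = parityVec y) : IsIntVec (midpoint ℝ x y) := by
  intro j
  obtain ⟨a, ha⟩ := hx j
  obtain ⟨b, hb⟩ := hy j
  have hab : (a : ZMod 2) = b := by simpa [parityVec, ha, hb] using congrFun h j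
  simpa [pi_midpoint_apply, ha, hb] using Int.exists_midpoint_eq_intCast_of_zmod_two_eq hab

theorem injOn_parityVec {p : ℕ} {S : Set (Fin p → ℝ)} (hSint : ∀ x ∈ S, IsIntVec x)
    (hSext : ∀ x ∈ S, x ∈ Set.extremePoints ℝ (convexHull ℝ S))
    (hSlat : ∀ x ∈ convexHull ℝ S, IsIntVec x → x ∈ S) : S.InjOn parityVec := by
  intro x hx y hy h
  have hm : midpoint ℝ x y ∈ convexHull ℝ S :=
    (convex_convexHull ℝ S).openSegment_subset (subset_convexHull ℝ S hx)
      (subset_convexHull ℝ S hy) (midpoint_mem_openSegment x y)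
  exact eq_of_midpoint_mem_extremePoints (subset_convexHull ℝ S hx) (subset_convexHull ℝ S hy)
    (hSext _ (hSlat _ hm ((hSint x hx).midpoint (hSint y hy) h)))

theorem Set.finite_and_ncard_le_natCard_of_injOn {α β : Type*} [Finite β] {s : Set α}
    {f : α → β} (hf : s.InjOn f) : s.Finite ∧ s.ncard ≤ Nat.card β :=
  ⟨Finite.of_injOn (mapsTo_univ f s) hf finite_univ,
    ncard_univ β ▸ ncard_le_ncard_of_injOn f (fun _ _ ↦ mem_univ _) hf⟩

/-- A set of integer points all of which are extreme points of their convex hull, and which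
contains all integer points of that hull, has at most `2^p` elements. -/
theorem card_le_two_pow_of_extreme_integer_points
    {p : ℕ} (S : Set (Fin p → ℝ))
    (hSint : ∀ x ∈ S, IsIntVec x)
    (hSext : ∀ x ∈ S, x ∈ Set.extremePoints ℝ (convexHull ℝ S))
    (hSlat : ∀ x ∈ convexHull ℝ S, IsIntVec x → x ∈ S) :
    S.Finite ∧ S.ncard ≤ 2 ^ p := by
  simpa using Set.finite_and_ncard_le_natCard_of_injOn (injOn_parityVec hSint hSext hSlat)

end
end

section
/- Let n ≥ 1, and for a ∈ {−1,1}^n set π(a) := |{i ∈ {1,…,n} : a_i = 1}| − 1. Define Q := {(x,t) ∈ ℝ^n × ℝ : 0 ≤ t ≤ 2 and a·x − π(a)·t ≤ 1 for all a ∈ {−1,1}^n}. Then: (i) for every z ∈ ℤ^n, the point (z,1) is not in the topological interior of Q; and (ii) for every z ∈ {0,1}^n, the point (z,1) belongs to Q. -/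
/-!
For integer `z`, take the sign vector `a` with `aᵢ = 1` exactly where `zᵢ ≥ 1`. Termwise
`aᵢ zᵢ ≥ [aᵢ = 1]`, so `a·z − π(a) ≥ 1`: the point `(z,1)` lies on or beyond the facet of `a`, and
moving it by `s·(a,0)` raises `a·x` by `n·s > 0`, leaving `Q`. For `z ∈ {0,1}ⁿ` the termwise
inequality reverses, `aᵢ zᵢ ≤ [aᵢ = 1]`, which is every facet inequality at `t = 1`.
-/

open Set

noncomputable section

/-- The polytope `Q ⊆ ℝⁿ × ℝ` defined by `0 ≤ t ≤ 2` and `a·x − π(a)·t ≤ 1` for all sign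
vectors `a ∈ {−1,1}ⁿ`, where `π(a) = |{i : aᵢ = 1}| − 1`. -/
def cubeQ (n : ℕ) : Set ((Fin n → ℝ) × ℝ) :=
  {z | 0 ≤ z.2 ∧ z.2 ≤ 2 ∧ ∀ a : Fin n → ℝ, (∀ i, a i = 1 ∨ a i = -1) →
    (∑ i, a i * z.1 i) - (((Set.ncard {i | a i = 1} : ℕ) : ℝ) - 1) * z.2 ≤ 1}

open Filter Topology

theorem notMem_interior_of_forall_pos_add_smul_notMem {E : Type*} [TopologicalSpace E]
    [AddCommGroup E] [Module ℝ E] [ContinuousAdd E] [ContinuousSMul ℝ E] {S : Set E} {p v : E}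
    (h : ∀ s : ℝ, 0 < s → p + s • v ∉ S) : p ∉ interior S := by
  intro hp
  have hcont : Continuous fun s : ℝ => p + s • v := by fun_prop
  have hev : ∀ᶠ s in 𝓝[>] (0 : ℝ), p + s • v ∈ S :=
    nhdsWithin_le_nhds <| hcont.continuousAt.eventually_mem <| by
      simpa using mem_interior_iff_mem_nhds.1 hp
  obtain ⟨s, hs, hpos⟩ := (hev.and self_mem_nhdsWithin).exists
  exact h s hpos hs

theorem ncard_setOf_eq_sum_ite {ι : Type*} [Fintype ι] (p : ι → Prop) [DecidablePred p] :
    ({i | p i}.ncard : ℝ) = ∑ i, if p i then 1 else 0 := by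
  rw [Finset.sum_boole, ← Set.ncard_coe_finset, Finset.coe_filter]; simp

section SignVector

variable {ι : Type*}

def IsSignVector (a : ι → ℝ) : Prop := ∀ i, a i = 1 ∨ a i = -1

theorem IsSignVector.sum_mul_add_mul_self [Fintype ι] {a : ι → ℝ} (ha : IsSignVector a)
    (x : ι → ℝ) (s : ℝ) :
    ∑ i, a i * (x i + s * a i) = ∑ i, a i * x i + Fintype.card ι * s := by
  have hterm : ∀ i, a i * (x i + s * a i) = a i * x i + s := fun i => by
    rcases ha i with h | h <;> rw [h] <;> ring
  simp [hterm, Finset.sum_add_distrib]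

theorem IsSignVector.sum_mul_le_ncard [Fintype ι] {a x : ι → ℝ} (ha : IsSignVector a)
    (hx : ∀ i, x i = 0 ∨ x i = 1) : ∑ i, a i * x i ≤ ({i | a i = 1}.ncard : ℝ) := by
  classical
  rw [ncard_setOf_eq_sum_ite (fun i => _ = 1)]
  refine Finset.sum_le_sum fun i _ => ?_
  rcases ha i with h | h <;> rcases hx i with h' | h' <;> norm_num [h, h']

def signPattern (z : ι → ℤ) : ι → ℝ := fun i => if 1 ≤ z i then 1 else -1

theorem isSignVector_signPattern (z : ι → ℤ) : IsSignVector (signPattern z) := fun i => by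
  unfold signPattern; split_ifs <;> simp

theorem ncard_le_sum_signPattern_mul [Fintype ι] (z : ι → ℤ) :
    ({i | signPattern z i = 1}.ncard : ℝ) ≤ ∑ i, signPattern z i * z i := by
  classical
  rw [ncard_setOf_eq_sum_ite (fun i => _ = 1)]
  refine Finset.sum_le_sum fun i _ => ?_
  unfold signPattern
  by_cases h : 1 ≤ z i
  · simpa [h] using (Int.cast_le (R := ℝ)).2 h
  · have : (z i : ℝ) ≤ 0 := by exact_mod_cast (by omega : z i ≤ 0)
    norm_num [h]; linarith

end SignVector

/-- At level `t = 1` the polytope `Q` contains no integer point in its interior, yet it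
contains all points `(z,1)` with `z ∈ {0,1}ⁿ`. -/
theorem cubeQ_no_interior_integer_points_at_level_one (n : ℕ) (hn : 1 ≤ n) :
    (∀ z : Fin n → ℤ, ((fun i => (z i : ℝ)), (1 : ℝ)) ∉ interior (cubeQ n)) ∧
    (∀ z : Fin n → ℝ, (∀ i, z i = 0 ∨ z i = 1) → (z, (1 : ℝ)) ∈ cubeQ n) := by
  refine ⟨fun z => ?_, fun z hz => ⟨zero_le_one, one_le_two, fun a ha => ?_⟩⟩
  · set a := signPattern z
    refine notMem_interior_of_forall_pos_add_smul_notMem (v := (a, 0)) fun s hs hmem => ?_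
    have hineq := hmem.2.2 a (isSignVector_signPattern z)
    simp only [Prod.fst_add, Prod.snd_add, Prod.smul_mk, Pi.add_apply, Pi.smul_apply, smul_eq_mul,
      mul_zero, add_zero, mul_one] at hineq
    rw [(isSignVector_signPattern z).sum_mul_add_mul_self, Fintype.card_fin] at hineq
    have hgain : (0 : ℝ) < n * s := mul_pos (by exact_mod_cast hn) hs
    linarith [ncard_le_sum_signPattern_mul z]
  · have := IsSignVector.sum_mul_le_ncard ha hz
    linarith

end
end
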